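/- arXiv:1711.08710 — 8 statements merged into one kernel-verified Lean document; each statement's English description precedes it below -/
import Mathlib

section
/- Let k be a natural number, let G be a finite simple graph, and let v be a vertex of G of degree at most 1. If the induced subgraph G − v is (0,k)-colorable, then G is (0,k)-colorable. -/
/-- `D` is the k-class of a (0,k)-coloring of `G` restricted to the vertex set `S`
(i.e. a (0,k)-coloring of the subgraph of `G` induced by `S`). -/
def Coloring0KOn {V : Type*} (G : SimpleGraph V) (k : ℕ) (S D : Set V) : Prop :=
  D ⊆ S ∧ (∀ a ∈ S, ∀ b ∈ S, G.Adj a b → a ∈ D ∨ b ∈ D) ∧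
    ∀ a ∈ D, {b | b ∈ D ∧ G.Adj a b}.ncard ≤ k

/-- `D` is the k-class of a (0,k)-coloring of `G`. -/
def Coloring0K {V : Type*} (G : SimpleGraph V) (k : ℕ) (D : Set V) : Prop :=
  (∀ a b : V, G.Adj a b → a ∈ D ∨ b ∈ D) ∧
    ∀ a ∈ D, {b | b ∈ D ∧ G.Adj a b}.ncard ≤ k

/-!
Take a (0,k)-coloring of `G - v`. If every neighbour of `v` is in the k-class, put `v` in the
independent class. Otherwise, as `v` has at most one neighbour, no neighbour of `v` is in the
k-class, and `v` can join it: `v` has degree 0 there and no other vertex of the k-class gains a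
neighbour.
-/

theorem SimpleGraph.forall_adj_mem_or_forall_adj_notMem {V : Type*} {G : SimpleGraph V} {v : V}
    [Fintype (G.neighborSet v)] (hv : G.degree v ≤ 1) (D : Set V) :
    (∀ w, G.Adj v w → w ∈ D) ∨ ∀ w, G.Adj v w → w ∉ D := by
  by_contra! ⟨⟨w, hw, hwD⟩, ⟨w', hw', hw'D⟩⟩
  have hww' : w = w' := Finset.card_le_one.mp hv w (by simpa using hw) w' (by simpa using hw')
  exact hwD (hww' ▸ hw'D)

section

variable {V : Type*} {G : SimpleGraph V} {k : ℕ} {S D : Set V} {v : V}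

theorem coloring0KOn_univ_iff : Coloring0KOn G k Set.univ D ↔ Coloring0K G k D :=
  ⟨fun hD => ⟨fun a b => hD.2.1 a trivial b trivial, hD.2.2⟩,
    fun hD => ⟨Set.subset_univ D, fun a _ b _ => hD.1 a b, hD.2⟩⟩

theorem Coloring0KOn.insert_of_forall_adj_mem (hD : Coloring0KOn G k S D)
    (hv : ∀ w, G.Adj v w → w ∈ D) : Coloring0KOn G k (insert v S) D := by
  refine ⟨hD.1.trans (Set.subset_insert v S), ?_, hD.2.2⟩
  rintro a (rfl | ha) b (rfl | hb) hab
  · exact absurd hab G.irrefl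
  · exact .inr (hv b hab)
  · exact .inl (hv a hab.symm)
  · exact hD.2.1 a ha b hb hab

theorem Coloring0KOn.insert_of_forall_adj_notMem (hD : Coloring0KOn G k S D)
    (hv : ∀ w, G.Adj v w → w ∉ D) : Coloring0KOn G k (insert v S) (insert v D) := by
  refine ⟨Set.insert_subset_insert hD.1, ?_, ?_⟩
  · rintro a (rfl | ha) b (rfl | hb) hab
    · exact .inl (Set.mem_insert _ _)
    · exact .inl (Set.mem_insert _ _)
    · exact .inr (Set.mem_insert _ _)
    · exact (hD.2.1 a ha b hb hab).imp (Set.mem_insert_of_mem v) (Set.mem_insert_of_mem v)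
  · rintro a (rfl | haD)
    · have hempty : {b | b ∈ insert a D ∧ G.Adj a b} = ∅ := by
        refine Set.eq_empty_of_forall_notMem fun b ⟨hb, hab⟩ => ?_
        rcases hb with rfl | hbD
        exacts [G.irrefl hab, hv b hab hbD]
      rw [hempty, Set.ncard_empty]
      exact k.zero_le
    · have hsame : {b | b ∈ insert v D ∧ G.Adj a b} = {b | b ∈ D ∧ G.Adj a b} := by
        ext b
        refine ⟨fun ⟨hb, hab⟩ => ⟨?_, hab⟩, fun ⟨hb, hab⟩ => ⟨Set.mem_insert_of_mem v hb, hab⟩⟩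
        rcases hb with rfl | hbD
        exacts [absurd haD (hv a hab.symm), hbD]
      exact hsame ▸ hD.2.2 a haD

end

theorem deg_le_one_colorable_general {V : Type*} [Fintype V]
    (G : SimpleGraph V) [DecidableRel G.Adj] (k : ℕ) (v : V)
    (hdeg : G.degree v ≤ 1)
    (h : ∃ D : Set V, Coloring0KOn G k ({v} : Set V)ᶜ D) :
    ∃ D : Set V, Coloring0K G k D := by
  obtain ⟨D, hD⟩ := h
  have hS : insert v ({v} : Set V)ᶜ = Set.univ := by
    rw [Set.insert_eq, Set.union_compl_self]
  rcases G.forall_adj_mem_or_forall_adj_notMem hdeg D with hin | hout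
  · exact ⟨D, coloring0KOn_univ_iff.mp (hS ▸ hD.insert_of_forall_adj_mem hin)⟩
  · exact ⟨insert v D, coloring0KOn_univ_iff.mp (hS ▸ hD.insert_of_forall_adj_notMem hout)⟩

/-- If `v` has degree at most 1 in `G` and the induced subgraph `G - v` is
(0,k)-colorable, then `G` is (0,k)-colorable. -/
theorem deg_le_one_colorable {V : Type*} [Fintype V] [DecidableEq V]
    (G : SimpleGraph V) [DecidableRel G.Adj] (k : ℕ) (v : V)
    (hdeg : G.degree v ≤ 1)
    (h : ∃ D : Set V, Coloring0KOn G k ({v} : Set V)ᶜ D) :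
    ∃ D : Set V, Coloring0K G k D :=
  deg_le_one_colorable_general G k v hdeg h
end

section
/- Let G be a finite simple graph and let v be a vertex of G of degree at most 7 such that every neighbor of v has degree at most 7 in G. If the induced subgraph G − v is (0,6)-colorable, then G is (0,6)-colorable. -/
/-!
Put `v` into the `k`-class (here `k = 6`). Since some neighbour `w` of `v` lies in the `0`-class,
`v` then has at most `k` neighbours in the `k`-class. The only other vertices that can now exceed
`k` are the saturated neighbours `u` of `v`, those with exactly `k` neighbours in the `k`-class;
as `deg u ≤ k + 1`, all neighbours of such `u` lie in the `k`-class or are `v`. Moving a maximal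
independent set `A` of saturated neighbours to the `0`-class keeps the `0`-class independent, and
every saturated neighbour outside `A` loses its neighbour in `A`, compensating for `v`.
If all neighbours of `v` are in the `k`-class, `v` simply joins the `0`-class.
-/

namespace SimpleGraph

variable {V : Type*} (G : SimpleGraph V)

theorem ncard_neighborSet_eq_degree (a : V) [Fintype (G.neighborSet a)] :
    (G.neighborSet a).ncard = G.degree a := by
  rw [Set.ncard_eq_toFinset_card', ← card_neighborSet_eq_degree, Set.toFinset_card]

/-- A maximal independent subset of `T` dominates `T`. -/
theorem exists_isIndepSet_subset_forall_exists_adj {T : Set V} (hT : T.Finite) :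
    ∃ A ⊆ T, G.IsIndepSet A ∧ ∀ u ∈ T, u ∉ A → ∃ a ∈ A, G.Adj u a := by
  obtain ⟨A, ⟨hAT, hA⟩, hmax⟩ := (hT.finite_subsets.subset
    fun A (hA : A ⊆ T ∧ G.IsIndepSet A) ↦ hA.1).exists_maximal
    (⟨∅, Set.empty_subset T, Set.pairwise_empty _⟩ : ∃ A, A ⊆ T ∧ G.IsIndepSet A)
  refine ⟨A, hAT, hA, fun u huT huA ↦ ?_⟩
  by_contra! hu
  have hins : G.IsIndepSet (insert u A) :=
    hA.insert fun a ha _ ↦ ⟨hu a ha, fun hau ↦ hu a ha hau.symm⟩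
  exact huA <|
    hmax ⟨Set.insert_subset huT hAT, hins⟩ (Set.subset_insert u A) (Set.mem_insert u A)

theorem neighborSet_subset_insert_of_ncard_inter_eq [Finite V] {k : ℕ} {D : Set V} {u v : V}
    (hu : (G.neighborSet u).ncard ≤ k + 1) (huv : G.Adj u v) (hvD : v ∉ D)
    (hk : (D ∩ G.neighborSet u).ncard = k) : G.neighborSet u ⊆ insert v D := by
  intro b hub
  by_contra hb
  obtain ⟨hbv, hbD⟩ : b ≠ v ∧ b ∉ D := by simpa only [Set.mem_insert_iff, not_or] using hb
  have hsub : insert v (insert b (D ∩ G.neighborSet u)) ⊆ G.neighborSet u := by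
    rintro c (rfl | rfl | hc)
    exacts [huv, hub, hc.2]
  have hcard : (insert v (insert b (D ∩ G.neighborSet u))).ncard = k + 2 := by
    rw [Set.ncard_insert_of_notMem, Set.ncard_insert_of_notMem fun h ↦ hbD h.1, hk]
    rintro (h | h)
    exacts [hbv h.symm, hvD h.1]
  have := Set.ncard_le_ncard hsub
  omega

end SimpleGraph

section Recoloring

variable {V : Type*} {G : SimpleGraph V} {k : ℕ} {v w : V} {D A : Set V}

theorem Coloring0KOn.coloring0K_of_forall_adj_mem (hD : Coloring0KOn G k {v}ᶜ D)
    (hv : ∀ u, G.Adj v u → u ∈ D) : Coloring0K G k D := by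
  refine ⟨fun a b hab ↦ ?_, hD.2.2⟩
  by_cases ha : a = v
  · exact .inr (hv b (ha ▸ hab))
  by_cases hb : b = v
  · exact .inl (hv a (hb ▸ hab.symm))
  exact hD.2.1 a ha b hb hab

theorem Coloring0KOn.adj_mem_insert_sdiff (hD : Coloring0KOn G k {v}ᶜ D)
    (hAind : G.IsIndepSet A) (hAnbr : ∀ a ∈ A, G.neighborSet a ⊆ insert v D)
    {a b : V} (hab : G.Adj a b) : a ∈ insert v (D \ A) ∨ b ∈ insert v (D \ A) := by
  have key : ∀ x y, y ≠ v → G.Adj x y → x ∈ D →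
      x ∈ insert v (D \ A) ∨ y ∈ insert v (D \ A) := by
    intro x y hyv hxy hxD
    by_cases hxA : x ∈ A
    · have hyD : y ∈ D := (hAnbr x hxA hxy).resolve_left hyv
      exact .inr (.inr ⟨hyD, fun hyA ↦ hAind hxA hyA hxy.ne hxy⟩)
    · exact .inl (.inr ⟨hxD, hxA⟩)
  by_cases ha : a = v
  · exact .inl (.inl ha)
  by_cases hb : b = v
  · exact .inr (.inl hb)
  rcases hD.2.1 a ha b hb hab with haD | hbD
  · exact key a b hb hab haD
  · exact (key b a ha hab.symm hbD).symm

theorem Coloring0KOn.ncard_insert_sdiff_inter_neighborSet_le [Finite V]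
    (hD : Coloring0KOn G k {v}ᶜ D) (hAD : A ⊆ D)
    (hAdom : ∀ u ∈ D, G.Adj v u → (D ∩ G.neighborSet u).ncard = k → u ∉ A →
      ∃ a ∈ A, G.Adj u a)
    {a : V} (haD : a ∈ D) (haA : a ∉ A) :
    (insert v (D \ A) ∩ G.neighborSet a).ncard ≤ k := by
  have hk : (D ∩ G.neighborSet a).ncard ≤ k := hD.2.2 a haD
  by_cases hva : G.Adj v a
  swap
  · refine (Set.ncard_le_ncard ?_).trans hk
    rintro b ⟨rfl | hb, hab⟩
    exacts [absurd hab.symm hva, ⟨hb.1, hab⟩]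
  by_cases htight : (D ∩ G.neighborSet a).ncard = k
  · obtain ⟨t, htA, hat⟩ := hAdom a haD hva htight haA
    have hsub :
        insert v (D \ A) ∩ G.neighborSet a ⊆ insert v ((D ∩ G.neighborSet a) \ {t}) := by
      rintro b ⟨rfl | ⟨hbD, hbA⟩, hab⟩
      exacts [.inl rfl, .inr ⟨⟨hbD, hab⟩, fun hbt ↦ hbA (hbt ▸ htA)⟩]
    have htN : t ∈ D ∩ G.neighborSet a := ⟨hAD htA, hat⟩
    have := Set.ncard_sdiff_singleton_add_one htN
    have := (Set.ncard_le_ncard hsub).trans (Set.ncard_insert_le _ _)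
    omega
  · have hsub : insert v (D \ A) ∩ G.neighborSet a ⊆ insert v (D ∩ G.neighborSet a) := by
      rintro b ⟨rfl | hb, hab⟩
      exacts [.inl rfl, .inr ⟨hb.1, hab⟩]
    have := (Set.ncard_le_ncard hsub).trans (Set.ncard_insert_le _ _)
    omega

theorem Coloring0KOn.coloring0K_insert_sdiff [Finite V] (hD : Coloring0KOn G k {v}ᶜ D)
    (hvw : G.Adj v w) (hwD : w ∉ D) (hv : (G.neighborSet v).ncard ≤ k + 1)
    (hAD : A ⊆ D) (hAind : G.IsIndepSet A) (hAnbr : ∀ a ∈ A, G.neighborSet a ⊆ insert v D)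
    (hAdom : ∀ u ∈ D, G.Adj v u → (D ∩ G.neighborSet u).ncard = k → u ∉ A →
      ∃ a ∈ A, G.Adj u a) :
    Coloring0K G k (insert v (D \ A)) := by
  refine ⟨fun a b ↦ hD.adj_mem_insert_sdiff hAind hAnbr, ?_⟩
  rintro a (rfl | ⟨haD, haA⟩)
  · change (insert a (D \ A) ∩ G.neighborSet a).ncard ≤ k
    have hsub : insert a (D \ A) ∩ G.neighborSet a ⊆ G.neighborSet a \ {w} := by
      rintro b ⟨rfl | hb, hab⟩
      · exact (G.irrefl hab).elim
      · exact ⟨hab, fun hbw ↦ hwD (hbw ▸ hb.1)⟩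
    have := Set.ncard_sdiff_singleton_add_one (s := G.neighborSet a) hvw
    have := Set.ncard_le_ncard hsub
    omega
  · exact hD.ncard_insert_sdiff_inter_neighborSet_le hAD hAdom haD haA

end Recoloring

theorem no_big_neighbor_colorable_general {V : Type*} [Fintype V]
    (G : SimpleGraph V) [DecidableRel G.Adj] (v : V)
    (hdeg : G.degree v ≤ 7)
    (hnbr : ∀ u : V, G.Adj v u → G.degree u ≤ 7)
    (h : ∃ D : Set V, Coloring0KOn G 6 ({v} : Set V)ᶜ D) :
    ∃ D : Set V, Coloring0K G 6 D := by
  obtain ⟨D, hD⟩ := h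
  have hvD : v ∉ D := fun hv ↦ hD.1 hv rfl
  by_cases hall : ∀ u, G.Adj v u → u ∈ D
  · exact ⟨D, hD.coloring0K_of_forall_adj_mem hall⟩
  push Not at hall
  obtain ⟨w, hvw, hwD⟩ := hall
  obtain ⟨A, hAT, hAind, hAdom⟩ := G.exists_isIndepSet_subset_forall_exists_adj
    (Set.toFinite {u | u ∈ D ∧ G.Adj v u ∧ (D ∩ G.neighborSet u).ncard = 6})
  have hAnbr : ∀ a ∈ A, G.neighborSet a ⊆ insert v D := by
    intro a ha
    obtain ⟨-, hva, ha6⟩ := hAT ha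
    exact G.neighborSet_subset_insert_of_ncard_inter_eq
      ((G.ncard_neighborSet_eq_degree a).trans_le (hnbr a hva)) hva.symm hvD ha6
  exact ⟨_, hD.coloring0K_insert_sdiff hvw hwD ((G.ncard_neighborSet_eq_degree v).trans_le hdeg)
    (fun a ha ↦ (hAT ha).1) hAind hAnbr fun u huD hvu hu huA ↦ hAdom u ⟨huD, hvu, hu⟩ huA⟩

/-- If `v` has degree at most 7 in `G`, every neighbor of `v` has degree at most 7
in `G`, and the induced subgraph `G - v` is (0,6)-colorable, then `G` is
(0,6)-colorable. -/
theorem no_big_neighbor_colorable {V : Type*} [Fintype V] [DecidableEq V]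
    (G : SimpleGraph V) [DecidableRel G.Adj] (v : V)
    (hdeg : G.degree v ≤ 7)
    (hnbr : ∀ u : V, G.Adj v u → G.degree u ≤ 7)
    (h : ∃ D : Set V, Coloring0KOn G 6 ({v} : Set V)ᶜ D) :
    ∃ D : Set V, Coloring0K G 6 D :=
  no_big_neighbor_colorable_general G v hdeg hnbr h
end

section
/- Let G be a finite simple graph, and let v be a vertex of G of degree d with 3 ≤ d ≤ 7, whose neighbors are w, w_1, …, w_{d−1}, where w has degree at least 8 in G and each w_i has degree at most 7 in G. Let H be the graph obtained from the induced subgraph G − v by adding d−1 new vertices v_1, …, v_{d−1}, where each v_i is adjacent exactly to w and to w_i. If H is (0,6)-colorable, then G is (0,6)-colorable. -/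
open Function SimpleGraph

section

variable {V W : Type*} {G : SimpleGraph V} {H : SimpleGraph W} {k : ℕ}

noncomputable def SimpleGraph.degreeIn (G : SimpleGraph V) (D : Set V) (a : V) : ℕ :=
  {b | b ∈ D ∧ G.Adj a b}.ncard

section DegreeIn

variable {D D' : Set V} {a : V}

lemma degreeIn_insert_of_not_adj {v : V} (hav : ¬ G.Adj a v) :
    G.degreeIn (insert v D) a = G.degreeIn D a := by
  unfold SimpleGraph.degreeIn
  congr 1
  ext b
  refine ⟨fun ⟨hb, hab⟩ => ⟨hb.resolve_left ?_, hab⟩, fun ⟨hb, hab⟩ => ⟨.inr hb, hab⟩⟩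
  rintro rfl
  exact hav hab

variable [Finite V]

lemma degreeIn_mono (h : D ⊆ D') : G.degreeIn D a ≤ G.degreeIn D' a :=
  Set.ncard_le_ncard (fun _ hb => ⟨h hb.1, hb.2⟩) (Set.toFinite _)

lemma degreeIn_insert_le (v : V) : G.degreeIn (insert v D) a ≤ G.degreeIn D a + 1 := by
  have hsub : {b | b ∈ insert v D ∧ G.Adj a b} ⊆ insert v {b | b ∈ D ∧ G.Adj a b} := by
    rintro b ⟨rfl | hb, hab⟩
    exacts [Set.mem_insert _ _, Set.mem_insert_of_mem _ ⟨hb, hab⟩]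
  exact (Set.ncard_le_ncard hsub (Set.toFinite _)).trans (Set.ncard_insert_le _ _)

lemma degreeIn_diff_lt {S : Set V} {s : V} (hsD : s ∈ D) (hsS : s ∈ S) (has : G.Adj a s) :
    G.degreeIn (D \ S) a < G.degreeIn D a := by
  refine Set.ncard_lt_ncard ⟨fun b hb => ⟨hb.1.1, hb.2⟩, fun h => ?_⟩ (Set.toFinite _)
  exact (h ⟨hsD, has⟩).1.2 hsS

end DegreeIn

section Comap

variable [Finite W] (f : G ↪g H) {D : Set W}

lemma degreeIn_comap_le (a : V) : G.degreeIn (f ⁻¹' D) a ≤ H.degreeIn D (f a) :=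
  Set.ncard_le_ncard_of_injOn f (fun _ hb => ⟨hb.1, f.map_adj_iff.2 hb.2⟩)
    f.injective.injOn (Set.toFinite _)

lemma degreeIn_comap_lt {a : V} {y : W} (hy : y ∈ D) (hay : H.Adj (f a) y)
    (hyf : y ∉ Set.range f) : G.degreeIn (f ⁻¹' D) a < H.degreeIn D (f a) := by
  have hsub : insert y (f '' {b | b ∈ f ⁻¹' D ∧ G.Adj a b}) ⊆ {b | b ∈ D ∧ H.Adj (f a) b} := by
    rintro _ (rfl | ⟨b, hb, rfl⟩)
    · exact ⟨hy, hay⟩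
    · exact ⟨hb.1, f.map_adj_iff.2 hb.2⟩
  have hy' : y ∉ f '' {b | b ∈ f ⁻¹' D ∧ G.Adj a b} := fun ⟨b, _, hb⟩ => hyf ⟨b, hb⟩
  have := Set.ncard_le_ncard hsub (Set.toFinite _)
  rwa [Set.ncard_insert_of_notMem hy', Set.ncard_image_of_injective _ f.injective] at this

lemma Coloring0K.comap (hD : Coloring0K H k D) : Coloring0K G k (f ⁻¹' D) :=
  ⟨fun _ _ hab => hD.1 _ _ (f.map_adj_iff.2 hab),
    fun a ha => (degreeIn_comap_le f a).trans (hD.2 _ ha)⟩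

end Comap

section Map

variable (f : V ↪ W) {D : Set V}

lemma degreeIn_map (a : V) : (G.map f).degreeIn (f '' D) (f a) = G.degreeIn D a := by
  have : {y | y ∈ f '' D ∧ (G.map f).Adj (f a) y} = f '' {b | b ∈ D ∧ G.Adj a b} := by
    ext y
    constructor
    · rintro ⟨⟨b, hb, rfl⟩, hab⟩
      exact ⟨b, ⟨hb, map_adj_apply.1 hab⟩, rfl⟩
    · rintro ⟨b, ⟨hb, hab⟩, rfl⟩
      exact ⟨⟨b, hb, rfl⟩, map_adj_apply.2 hab⟩
  rw [SimpleGraph.degreeIn, this, Set.ncard_image_of_injective _ f.injective, SimpleGraph.degreeIn]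

lemma Coloring0K.map (hD : Coloring0K G k D) : Coloring0K (G.map f) k (f '' D) := by
  refine ⟨?_, ?_⟩
  · rintro _ _ ⟨-, a, b, hab, rfl, rfl⟩
    exact (hD.1 a b hab).imp (Set.mem_image_of_mem f) (Set.mem_image_of_mem f)
  · rintro _ ⟨a, ha, rfl⟩
    exact (degreeIn_map f a).trans_le (hD.2 a ha)

end Map

section DeleteVertex

variable (v : V)

lemma map_subtype_eq_deleteIncidenceSet {G' : SimpleGraph {z // z ≠ v}}
    (hG' : ∀ a b, G'.Adj a b ↔ G.Adj a b) :
    G'.map (Embedding.subtype _) = G.deleteIncidenceSet v := by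
  ext x y
  rw [map_adj, deleteIncidenceSet_adj]
  constructor
  · rintro ⟨a, b, hab, rfl, rfl⟩
    exact ⟨(hG' a b).1 hab, a.2, b.2⟩
  · rintro ⟨hxy, hx, hy⟩
    exact ⟨⟨x, hx⟩, ⟨y, hy⟩, (hG' _ _).2 hxy, rfl, rfl⟩

variable {v} {D : Set V}

lemma degreeIn_deleteIncidenceSet (hv : v ∉ D) {a : V} (ha : a ≠ v) :
    (G.deleteIncidenceSet v).degreeIn D a = G.degreeIn D a := by
  unfold SimpleGraph.degreeIn
  congr 1
  ext b
  simp only [Set.mem_ofPred_eq, deleteIncidenceSet_adj]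
  exact ⟨fun h => ⟨h.1, h.2.1⟩, fun h => ⟨h.1, h.2, ha, fun hb => hv (hb ▸ h.1)⟩⟩

lemma Coloring0K.of_deleteIncidenceSet (hD : Coloring0K (G.deleteIncidenceSet v) k D)
    (hv : v ∉ D) (hN : G.neighborSet v ⊆ D) : Coloring0K G k D := by
  refine ⟨fun a b hab => ?_, fun a ha => ?_⟩
  · by_cases hav : a = v
    · exact .inr (hN (hav ▸ hab))
    by_cases hbv : b = v
    · exact .inl (hN (hbv ▸ hab.symm))
    exact hD.1 a b (deleteIncidenceSet_adj.2 ⟨hab, hav, hbv⟩)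
  · have hav : a ≠ v := fun h => hv (h ▸ ha)
    exact (degreeIn_deleteIncidenceSet hv hav).symm.trans_le (hD.2 a ha)

end DeleteVertex

lemma SimpleGraph.exists_isIndepSet_forall_adj [Finite V] (G : SimpleGraph V) (P : Set V) :
    ∃ S ⊆ P, G.IsIndepSet S ∧ ∀ p ∈ P, p ∉ S → ∃ s ∈ S, G.Adj p s := by
  obtain ⟨S, -, hS⟩ := Finite.exists_le_maximal (p := fun S : Set V => S ⊆ P ∧ G.IsIndepSet S)
    (a := ∅) ⟨Set.empty_subset P, Set.pairwise_empty _⟩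
  refine ⟨S, hS.prop.1, hS.prop.2, fun p hp hpS => ?_⟩
  by_contra! hfree
  refine hpS (hS.mem_of_prop_insert ⟨Set.insert_subset hp hS.prop.1, ?_⟩)
  exact hS.prop.2.insert fun s hs _ => ⟨hfree s hs, fun h => hfree s hs h.symm⟩

lemma Coloring0K.exists_of_deleteIncidenceSet [Finite V] {v : V} {D : Set V}
    (hD : Coloring0K (G.deleteIncidenceSet v) k D) (hv : v ∉ D) (hvk : G.degreeIn D v ≤ k)
    (hsat : ∀ u ∈ D, G.Adj v u → k ≤ G.degreeIn D u → G.neighborSet u \ {v} ⊆ D) :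
    ∃ D', Coloring0K G k D' := by
  obtain ⟨S, hSP, hSind, hSdom⟩ :=
    G.exists_isIndepSet_forall_adj {u | u ∈ D ∧ G.Adj v u ∧ k ≤ G.degreeIn D u}
  have hSD : S ⊆ D := fun s hs => (hSP hs).1
  refine ⟨insert v (D \ S), fun a b hab => ?_, ?_⟩
  · have hcover : ∀ a b, G.Adj a b → b ≠ v → a ∈ D →
        a ∈ insert v (D \ S) ∨ b ∈ insert v (D \ S) := by
      intro a b hab hbv haD
      by_cases haS : a ∈ S
      · have ⟨haD, hva, hak⟩ := hSP haS
        refine .inr (.inr ⟨hsat a haD hva hak ⟨hab, hbv⟩, fun hbS => ?_⟩)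
        exact hSind haS hbS hab.ne hab
      · exact .inl (.inr ⟨haD, haS⟩)
    by_cases hav : a = v
    · exact .inl (.inl hav)
    by_cases hbv : b = v
    · exact .inr (.inl hbv)
    rcases hD.1 a b (deleteIncidenceSet_adj.2 ⟨hab, hav, hbv⟩) with haD | hbD
    · exact hcover a b hab hbv haD
    · exact (hcover b a hab.symm hav hbD).symm
  rintro a (rfl | ⟨haD, haS⟩)
  all_goals show G.degreeIn _ _ ≤ k
  · rw [degreeIn_insert_of_not_adj G.irrefl]
    exact (degreeIn_mono Set.sdiff_subset).trans hvk
  have hak : G.degreeIn D a ≤ k := by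
    rw [← degreeIn_deleteIncidenceSet hv fun h => hv (h ▸ haD)]
    exact hD.2 a haD
  by_cases hav : G.Adj a v
  · refine (degreeIn_insert_le v).trans (Nat.succ_le_of_lt ?_)
    by_cases hsat : k ≤ G.degreeIn D a
    · obtain ⟨s, hsS, has⟩ := hSdom a ⟨haD, hav.symm, hsat⟩ haS
      exact (degreeIn_diff_lt (hSD hsS) hsS has).trans_le hak
    · exact (degreeIn_mono Set.sdiff_subset).trans_lt (not_le.1 hsat)
  · rw [degreeIn_insert_of_not_adj hav]
    exact (degreeIn_mono Set.sdiff_subset).trans hak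

lemma ncard_neighborSet {u : V} [Fintype (G.neighborSet u)] :
    (G.neighborSet u).ncard = G.degree u := by
  rw [← Nat.card_coe_set_eq, Nat.card_eq_fintype_card, card_neighborSet_eq_degree]

lemma degreeIn_lt_degree {D : Set V} {a b : V} [Fintype (G.neighborSet a)] (hab : G.Adj a b)
    (hb : b ∉ D) : G.degreeIn D a < G.degree a := by
  rw [← ncard_neighborSet]
  exact Set.ncard_lt_ncard ⟨fun c hc => hc.2, fun h => hb (h hab).1⟩ (Set.toFinite _)

lemma neighborSet_diff_subset_of_le_degreeIn {D : Set V} {u v : V} [Fintype (G.neighborSet u)]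
    (hdeg : G.degree u ≤ k + 1) (huv : G.Adj u v) (hv : v ∉ D) (hk : k ≤ G.degreeIn D u) :
    G.neighborSet u \ {v} ⊆ D := by
  have hsub : {b | b ∈ D ∧ G.Adj u b} ⊆ G.neighborSet u \ {v} :=
    fun b hb => ⟨hb.2, fun hbv => hv (hbv ▸ hb.1)⟩
  have hcard : (G.neighborSet u \ {v}).ncard ≤ G.degreeIn D u := by
    rw [Set.ncard_sdiff_singleton_of_mem (s := G.neighborSet u) huv, ncard_neighborSet]
    omega
  rw [← Set.eq_of_subset_of_ncard_le hsub hcard (Set.toFinite _)]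
  exact fun b hb => hb.1

section Inl

variable {v : V} {H : SimpleGraph ({z // z ≠ v} ⊕ W)} {D : Set ({z // z ≠ v} ⊕ W)}

lemma Coloring0K.deleteIncidenceSet_of_inl [Finite V] [Finite W]
    (hH : ∀ a b, H.Adj (.inl a) (.inl b) ↔ G.Adj a b) (hD : Coloring0K H k D) :
    Coloring0K (G.deleteIncidenceSet v) k (Subtype.val '' (Sum.inl ⁻¹' D)) := by
  rw [← map_subtype_eq_deleteIncidenceSet v (G' := H.comap Sum.inl) hH]
  exact (hD.comap (Embedding.comap .inl H)).map _

lemma degreeIn_image_inl_lt [Finite V] [Finite W]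
    (hH : ∀ a b, H.Adj (.inl a) (.inl b) ↔ G.Adj a b) {a : {z // z ≠ v}} {y : W}
    (hy : .inr y ∈ D) (hay : H.Adj (.inl a) (.inr y)) :
    G.degreeIn (Subtype.val '' (Sum.inl ⁻¹' D)) a < H.degreeIn D (.inl a) := by
  have hv : v ∉ Subtype.val '' (Sum.inl ⁻¹' D) := fun ⟨b, _, hb⟩ => b.2 hb
  calc G.degreeIn (Subtype.val '' (Sum.inl ⁻¹' D)) a
      = (G.deleteIncidenceSet v).degreeIn (Subtype.val '' (Sum.inl ⁻¹' D)) a :=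
        (degreeIn_deleteIncidenceSet hv a.2).symm
    _ = (H.comap Sum.inl).degreeIn (Sum.inl ⁻¹' D) a := by
        rw [← map_subtype_eq_deleteIncidenceSet v (G' := H.comap Sum.inl) hH]
        exact degreeIn_map _ a
    _ < H.degreeIn D (.inl a) :=
        degreeIn_comap_lt (Embedding.comap .inl H) hy hay (fun ⟨_, h⟩ => Sum.inl_ne_inr h)

end Inl

end

theorem surgery_colorable_general {V : Type*} [Fintype V]
    (G : SimpleGraph V) [DecidableRel G.Adj] (v : V) (d : ℕ)
    (hd7 : d ≤ 7) (hdeg : G.degree v = d)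
    (w : V) (ws : Fin (d - 1) → V)
    (hnbr : G.neighborSet v = insert w (Set.range ws))
    (hwsdeg : ∀ i, G.degree (ws i) ≤ 7)
    (H : SimpleGraph ({z : V // z ≠ v} ⊕ Fin (d - 1)))
    (hH1 : ∀ a b : {z : V // z ≠ v}, H.Adj (Sum.inl a) (Sum.inl b) ↔ G.Adj a.1 b.1)
    (hH2 : ∀ (a : {z : V // z ≠ v}) (i : Fin (d - 1)),
      H.Adj (Sum.inl a) (Sum.inr i) ↔ (a.1 = w ∨ a.1 = ws i))
    (hcol : ∃ D, Coloring0K H 6 D) :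
    ∃ D : Set V, Coloring0K G 6 D := by
  obtain ⟨D, hD⟩ := hcol
  set D₀ := Subtype.val '' (Sum.inl ⁻¹' D)
  have hv : v ∉ D₀ := fun ⟨b, _, hb⟩ => b.2 hb
  have hD₀ : Coloring0K (G.deleteIncidenceSet v) 6 D₀ := hD.deleteIncidenceSet_of_inl hH1
  by_cases hN : G.neighborSet v ⊆ D₀
  · exact ⟨D₀, hD₀.of_deleteIncidenceSet hv hN⟩
  obtain ⟨u₀, hvu₀, hu₀⟩ := Set.not_subset.1 hN
  have hvk : G.degreeIn D₀ v ≤ 6 := by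
    have := degreeIn_lt_degree hvu₀ hu₀
    omega
  refine hD₀.exists_of_deleteIncidenceSet hv hvk fun u huD hvu hu => ?_
  obtain ⟨a, ha, rfl⟩ := huD
  rcases (hnbr ▸ hvu : a.1 ∈ insert w (Set.range ws)) with haw | ⟨i, hai⟩
  · -- `u₀ = ws j` is in the 0-class, so `v_j` is a 6-class neighbour of `w` in `H` unseen in `G`.
    obtain ⟨j, rfl⟩ : u₀ ∈ Set.range ws := by
      rcases (hnbr ▸ hvu₀ : u₀ ∈ insert w (Set.range ws)) with rfl | h
      exacts [absurd (haw ▸ ⟨a, ha, rfl⟩) hu₀, h]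
    have hj : Sum.inr j ∈ D := (hD.1 _ _ ((hH2 ⟨ws j, hvu₀.ne'⟩ j).2 (.inr rfl))).resolve_left
      fun h => hu₀ ⟨_, h, rfl⟩
    have hlt := degreeIn_image_inl_lt hH1 hj ((hH2 a j).2 (.inl haw))
    exact absurd (hlt.trans_le (hD.2 _ ha)) (not_lt.2 hu)
  · rw [← hai] at hu hvu ⊢
    exact neighborSet_diff_subset_of_le_degreeIn (hwsdeg i) hvu.symm hv hu

/-- Lemma 5 surgery (coloring transfer): `v` has degree `d` with `3 ≤ d ≤ 7`, its
neighbors are `w, w_1, …, w_{d-1}` where `w` has degree at least 8 and each `w_i`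
degree at most 7. `H` is obtained from `G - v` by adding `d-1` new vertices
`v_1, …, v_{d-1}` with `v_i` adjacent exactly to `w` and `w_i`. If `H` is
(0,6)-colorable then so is `G`. -/
theorem surgery_colorable {V : Type*} [Fintype V] [DecidableEq V]
    (G : SimpleGraph V) [DecidableRel G.Adj] (v : V) (d : ℕ)
    (hd3 : 3 ≤ d) (hd7 : d ≤ 7) (hdeg : G.degree v = d)
    (w : V) (ws : Fin (d - 1) → V)
    (hnbr : G.neighborSet v = insert w (Set.range ws))
    (hinj : Function.Injective ws) (hwne : w ∉ Set.range ws)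
    (hwdeg : 8 ≤ G.degree w) (hwsdeg : ∀ i, G.degree (ws i) ≤ 7)
    (H : SimpleGraph ({z : V // z ≠ v} ⊕ Fin (d - 1)))
    (hH1 : ∀ a b : {z : V // z ≠ v}, H.Adj (Sum.inl a) (Sum.inl b) ↔ G.Adj a.1 b.1)
    (hH2 : ∀ (a : {z : V // z ≠ v}) (i : Fin (d - 1)),
      H.Adj (Sum.inl a) (Sum.inr i) ↔ (a.1 = w ∨ a.1 = ws i))
    (hH3 : ∀ i j : Fin (d - 1), ¬ H.Adj (Sum.inr i) (Sum.inr j))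
    (hcol : ∃ D, Coloring0K H 6 D) :
    ∃ D : Set V, Coloring0K G 6 D :=
  surgery_colorable_general G v d hd7 hdeg w ws hnbr hwsdeg H hH1 hH2 hcol
end

section
/- Let G be a finite simple graph, and let v be a vertex of G of degree d with 3 ≤ d ≤ 7, whose neighbors are w, w_1, …, w_{d−1}. Let H be the graph obtained from the induced subgraph G − v by adding d−1 new vertices v_1, …, v_{d−1}, where each v_i is adjacent exactly to w and to w_i. If G contains no cycle of length 3, no cycle of length 4, and no cycle of length 6, then H contains no cycle of length 3, no cycle of length 4, and no cycle of length 6. (Indeed, every cycle of length ℓ in H yields a cycle of length ℓ or ℓ−2 in G.) -/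
/-!
Sending every new vertex `v_i` back to `v` is a homomorphism `H →g G` that is injective on any
vertex set containing at most one `v_i`, so a cycle of `H` through at most one `v_i` maps to a
cycle of `G` of the same length. On a cycle of `H` each `v_i` must use both of its neighbours `w`
and `w_i`, hence a cycle through two distinct `v_i`, `v_j` runs `v_i, w, v_j` and meets no other
`v_k`; skipping `w` and `v_j` and sending `v_i` to `v` leaves a cycle of `G` that is shorter by two
(and still of length at least 3, since `w_i ≠ w_j` rules out a common neighbour besides `w`).
-/

/-- `G` contains no cycle of length 3, no cycle of length 4, and no cycle of length 6. -/
def CycleFree346 {V : Type*} (G : SimpleGraph V) : Prop :=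
  ∀ (a : V) (p : G.Walk a a), p.IsCycle →
    p.length ≠ 3 ∧ p.length ≠ 4 ∧ p.length ≠ 6

open Function Set

namespace SimpleGraph

variable {V V' : Type*} {G : SimpleGraph V} {G' : SimpleGraph V'}

namespace Walk

lemma IsPath.map_of_injOn (f : G →g G') {u v : V} {p : G.Walk u v} (hp : p.IsPath)
    (hf : InjOn f {x | x ∈ p.support}) : (p.map f).IsPath := by
  rw [isPath_def, support_map]
  exact hp.support_nodup.map_on fun x hx y hy hxy => hf hx hy hxy

lemma IsPath.isCycle_cons {u v : V} {p : G.Walk v u} (hp : p.IsPath) (h : G.Adj u v)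
    (hl : 2 ≤ p.length) : (cons h p).IsCycle := by
  rw [isCycle_iff_isPath_tail_and_le_length]
  simpa [hl] using hp

lemma IsCycle.map_of_injOn (f : G →g G') {u : V} {p : G.Walk u u} (hp : p.IsCycle)
    (hf : InjOn f {x | x ∈ p.support}) : (p.map f).IsCycle := by
  cases p with
  | nil => exact absurd hp not_isCycle_nil
  | cons h q =>
    have hl := hp.three_le_length
    rw [length_cons] at hl
    refine (((cons_isCycle_iff q h).mp hp).1.map_of_injOn f ?_).isCycle_cons _
      (by rw [length_map]; omega)
    exact hf.mono fun x hx => List.mem_cons_of_mem _ hx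

lemma IsCycle.toSubgraph_adj_of_neighborSet_subset {u x a b : V} {p : G.Walk u u}
    (hp : p.IsCycle) (hx : x ∈ p.support) (hN : G.neighborSet x ⊆ {a, b}) :
    p.toSubgraph.Adj x a ∧ p.toSubgraph.Adj x b := by
  have hsub : p.toSubgraph.neighborSet x ⊆ {a, b} := fun y hy => hN (p.toSubgraph.adj_sub hy)
  have hcard : ({a, b} : Set V).ncard ≤ (p.toSubgraph.neighborSet x).ncard := by
    rw [hp.ncard_neighborSet_toSubgraph_eq_two hx]
    exact (ncard_insert_le a {b}).trans (by simp)
  have heq := eq_of_subset_of_ncard_le hsub hcard (toFinite _)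
  have ha : a ∈ p.toSubgraph.neighborSet x := heq ▸ mem_insert a {b}
  have hb : b ∈ p.toSubgraph.neighborSet x := heq ▸ mem_insert_of_mem a rfl
  exact ⟨ha, hb⟩

lemma IsCycle.eq_or_eq_of_toSubgraph_adj {u x a b c : V} {p : G.Walk u u} (hp : p.IsCycle)
    (ha : p.toSubgraph.Adj x a) (hb : p.toSubgraph.Adj x b) (hc : p.toSubgraph.Adj x c)
    (hab : a ≠ b) : c = a ∨ c = b := by
  have hx : x ∈ p.support := (mem_verts_toSubgraph p).mp (p.toSubgraph.edge_vert ha)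
  obtain ⟨y, z, -, hyz⟩ := ncard_eq_two.mp (hp.ncard_neighborSet_toSubgraph_eq_two hx)
  have ha : a ∈ ({y, z} : Set V) := hyz ▸ ha
  have hb : b ∈ ({y, z} : Set V) := hyz ▸ hb
  have hc : c ∈ ({y, z} : Set V) := hyz ▸ hc
  simp only [mem_insert_iff, mem_singleton_iff] at ha hb hc
  grind

lemma IsCycle.snd_eq_or_penultimate_eq {u x : V} {p : G.Walk u u} (hp : p.IsCycle)
    (h : p.toSubgraph.Adj u x) : p.snd = x ∨ p.penultimate = x := by
  have : x ∈ p.toSubgraph.neighborSet u := h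
  rw [hp.neighborSet_toSubgraph_endpoint] at this
  simpa [eq_comm] using this

lemma exists_getVert_eq_of_mem_support_drop {u v x : V} {p : G.Walk u v} {n : ℕ}
    (hn : n ≤ p.length) (hx : x ∈ (p.drop n).support) :
    ∃ m, n ≤ m ∧ m ≤ p.length ∧ p.getVert m = x := by
  obtain ⟨k, rfl, hk⟩ := mem_support_iff_exists_getVert.mp hx
  rw [drop_length] at hk
  exact ⟨n + k, by omega, by omega, (drop_getVert p n k).symm⟩

end Walk

section Surgery

open Walk

variable {ι : Type*} {v : V}

/-- `inl a` is the vertex `a` of `G - v` and `inr i` is the new vertex `v_i`. -/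
structure IsSurgery (G : SimpleGraph V) (v : V) (w : {z // z ≠ v}) (ws : ι → {z // z ≠ v})
    (H : SimpleGraph ({z // z ≠ v} ⊕ ι)) : Prop where
  adj_inl_inl : ∀ a b, H.Adj (.inl a) (.inl b) → G.Adj a b
  adj_inl_inr : ∀ a i, H.Adj (.inl a) (.inr i) → a = w ∨ a = ws i
  not_adj_inr_inr : ∀ i j, ¬ H.Adj (.inr i) (.inr j)
  adj_w : G.Adj v w
  adj_ws : ∀ i, G.Adj v (ws i)
  ws_injective : Injective ws

def collapse (v : V) : {z // z ≠ v} ⊕ ι → V :=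
  Sum.elim Subtype.val fun _ => v

lemma injOn_collapse {s : Set ({z // z ≠ v} ⊕ ι)}
    (hs : ∀ i j, .inr i ∈ s → .inr j ∈ s → i = j) : InjOn (collapse v) s := by
  rintro (a | i) ha (b | j) hb h
  · exact congrArg Sum.inl (Subtype.ext h)
  · exact absurd h a.2
  · exact absurd h.symm b.2
  · rw [hs i j ha hb]

namespace IsSurgery

variable {w : {z // z ≠ v}} {ws : ι → {z // z ≠ v}} {H : SimpleGraph ({z // z ≠ v} ⊕ ι)}

def collapseHom (hS : IsSurgery G v w ws H) : H →g G where
  toFun := collapse v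
  map_rel' := by
    rintro (a | i) (b | j) h
    · exact hS.adj_inl_inl a b h
    · rcases hS.adj_inl_inr a j h with rfl | rfl
      exacts [hS.adj_w.symm, (hS.adj_ws j).symm]
    · rcases hS.adj_inl_inr b i h.symm with rfl | rfl
      exacts [hS.adj_w, hS.adj_ws i]
    · exact absurd h (hS.not_adj_inr_inr i j)

lemma neighborSet_inr_subset (hS : IsSurgery G v w ws H) (i : ι) :
    H.neighborSet (.inr i) ⊆ {.inl w, .inl (ws i)} := by
  rintro (a | j) h
  · rcases hS.adj_inl_inr a i h.symm with rfl | rfl <;> simp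
  · exact absurd h (hS.not_adj_inr_inr i j)

lemma eq_inl_of_adj_inr_of_adj_inr (hS : IsSurgery G v w ws H) {x : {z // z ≠ v} ⊕ ι}
    {i j : ι} (hi : H.Adj x (.inr i)) (hj : H.Adj x (.inr j)) (hij : i ≠ j) : x = .inl w := by
  have hi := hS.neighborSet_inr_subset i hi.symm
  have hj := hS.neighborSet_inr_subset j hj.symm
  simp only [mem_insert_iff, mem_singleton_iff] at hi hj
  rcases hi with hi | hi
  · exact hi
  · rcases hj with hj | hj
    · exact hj
    · exact absurd (hS.ws_injective (Sum.inl_injective (hi.symm.trans hj))) hij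

lemma toSubgraph_adj_w (hS : IsSurgery G v w ws H) {u} {p : H.Walk u u} (hp : p.IsCycle)
    {i : ι} (hi : .inr i ∈ p.support) : p.toSubgraph.Adj (.inl w) (.inr i) :=
  (hp.toSubgraph_adj_of_neighborSet_subset hi (hS.neighborSet_inr_subset i)).1.symm

lemma eq_or_eq_of_inr_mem_support (hS : IsSurgery G v w ws H) {u} {p : H.Walk u u}
    (hp : p.IsCycle) {i j k : ι} (hi : .inr i ∈ p.support) (hj : .inr j ∈ p.support)
    (hk : .inr k ∈ p.support) (hij : i ≠ j) : k = i ∨ k = j := by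
  simpa using hp.eq_or_eq_of_toSubgraph_adj (hS.toSubgraph_adj_w hp hi)
    (hS.toSubgraph_adj_w hp hj) (hS.toSubgraph_adj_w hp hk) (by simpa using hij)

section SndEq

variable {i j : ι} {p : H.Walk (.inr i) (.inr i)}

lemma getVert_two_eq_of_snd_eq (hS : IsSurgery G v w ws H) (hp : p.IsCycle)
    (hsnd : p.snd = .inl w) (hj : .inr j ∈ p.support) (hij : i ≠ j) : p.getVert 2 = .inr j := by
  have hl := hp.three_le_length
  have hadj : p.toSubgraph.Adj (.inl w) (p.getVert 2) :=
    hsnd ▸ p.toSubgraph_adj_getVert (i := 1) (by omega)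
  rcases hp.eq_or_eq_of_toSubgraph_adj (hS.toSubgraph_adj_w hp p.start_mem_support)
    (hS.toSubgraph_adj_w hp hj) hadj (by simpa using hij) with h | h
  · exact absurd ((hp.getVert_endpoint_iff (by omega)).mp h) (by omega)
  · exact h

lemma five_le_length_of_snd_eq (hS : IsSurgery G v w ws H) (hp : p.IsCycle)
    (hsnd : p.snd = .inl w) (hj : .inr j ∈ p.support) (hij : i ≠ j) : 5 ≤ p.length := by
  have hl := hp.three_le_length
  by_contra! hlt
  have h23 := p.adj_getVert_succ (i := 2) (by omega)
  rw [hS.getVert_two_eq_of_snd_eq hp hsnd hj hij] at h23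
  obtain hl3 | hl4 : p.length = 3 ∨ p.length = 4 := by omega
  · rw [p.getVert_of_length_le hl3.le] at h23
    exact hS.not_adj_inr_inr j i h23
  · have h34 := p.adj_getVert_succ (i := 3) (by omega)
    rw [p.getVert_of_length_le hl4.le] at h34
    have h3 := hS.eq_inl_of_adj_inr_of_adj_inr h23.symm h34 (Ne.symm hij)
    have := hp.getVert_injOn ⟨by omega, by omega⟩ ⟨by omega, by omega⟩ (hsnd.trans h3.symm)
    omega

lemma eq_of_inr_mem_support_drop_three (hS : IsSurgery G v w ws H) (hp : p.IsCycle)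
    (hsnd : p.snd = .inl w) (hj : .inr j ∈ p.support) (hij : i ≠ j) {k : ι}
    (hk : .inr k ∈ (p.drop 3).support) : k = i := by
  have h5 := hS.five_le_length_of_snd_eq hp hsnd hj hij
  obtain ⟨m, hm3, hml, hm⟩ := exists_getVert_eq_of_mem_support_drop (by omega) hk
  rcases hS.eq_or_eq_of_inr_mem_support hp p.start_mem_support hj
    (hm ▸ p.getVert_mem_support m) hij with rfl | rfl
  · rfl
  · have := hp.getVert_injOn ⟨by omega, by omega⟩ ⟨by omega, by omega⟩
      (hm.trans (hS.getVert_two_eq_of_snd_eq hp hsnd hj hij).symm)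
    omega

lemma exists_isCycle_length_add_two_of_snd_eq (hS : IsSurgery G v w ws H) (hp : p.IsCycle)
    (hsnd : p.snd = .inl w) (hj : .inr j ∈ p.support) (hij : i ≠ j) :
    ∃ (a : V) (c : G.Walk a a), c.IsCycle ∧ c.length + 2 = p.length := by
  have h5 := hS.five_le_length_of_snd_eq hp hsnd hj hij
  have hadj : G.Adj (hS.collapseHom (.inr i)) (hS.collapseHom (p.getVert 3)) := by
    have := hS.collapseHom.map_adj (p.adj_getVert_succ (i := 2) (by omega))
    rwa [hS.getVert_two_eq_of_snd_eq hp hsnd hj hij] at this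
  have hinj : InjOn hS.collapseHom {x | x ∈ (p.drop 3).support} :=
    injOn_collapse fun k l hk hl =>
      (hS.eq_of_inr_mem_support_drop_three hp hsnd hj hij hk).trans
        (hS.eq_of_inr_mem_support_drop_three hp hsnd hj hij hl).symm
  refine ⟨_, cons hadj ((p.drop 3).map hS.collapseHom),
    ((hp.isPath_drop (by norm_num)).map_of_injOn _ hinj).isCycle_cons _ ?_, ?_⟩
  all_goals simp only [length_cons, length_map, drop_length]; omega

end SndEq

lemma exists_isCycle_length_add_two (hS : IsSurgery G v w ws H) {u} {p : H.Walk u u}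
    (hp : p.IsCycle) {i j : ι} (hi : .inr i ∈ p.support) (hj : .inr j ∈ p.support)
    (hij : i ≠ j) : ∃ (a : V) (c : G.Walk a a), c.IsCycle ∧ c.length + 2 = p.length := by
  classical
  have hc : (p.rotate _ hi).IsCycle := hp.rotate hi
  have hjc : .inr j ∈ (p.rotate _ hi).support := (mem_support_rotate_iff ..).mpr hj
  rcases hc.snd_eq_or_penultimate_eq (hS.toSubgraph_adj_w hc (start_mem_support _)).symm
    with h | h
  · simpa using hS.exists_isCycle_length_add_two_of_snd_eq hc h hjc hij
  · simpa using hS.exists_isCycle_length_add_two_of_snd_eq hc.reverse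
      (by rwa [snd_reverse]) (by simpa using hjc) hij

lemma exists_isCycle_length (hS : IsSurgery G v w ws H) {u} {p : H.Walk u u}
    (hp : p.IsCycle) :
    ∃ (a : V) (c : G.Walk a a), c.IsCycle ∧ (c.length = p.length ∨ c.length + 2 = p.length) := by
  by_cases h : ∃ i j, .inr i ∈ p.support ∧ .inr j ∈ p.support ∧ i ≠ j
  · obtain ⟨i, j, hi, hj, hij⟩ := h
    obtain ⟨a, c, hc, hl⟩ := hS.exists_isCycle_length_add_two hp hi hj hij
    exact ⟨a, c, hc, .inr hl⟩
  · push Not at h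
    exact ⟨_, p.map hS.collapseHom, hp.map_of_injOn _ (injOn_collapse h), .inl (length_map ..)⟩

end IsSurgery

end Surgery

end SimpleGraph

open SimpleGraph

theorem surgery_cycle_free_general {V : Type*}
    (G : SimpleGraph V) (v : V) (d : ℕ)
    (w : V) (ws : Fin (d - 1) → V)
    (hnbr : G.neighborSet v = insert w (Set.range ws))
    (hinj : Function.Injective ws)
    (H : SimpleGraph ({z : V // z ≠ v} ⊕ Fin (d - 1)))
    (hH1 : ∀ a b : {z : V // z ≠ v}, H.Adj (Sum.inl a) (Sum.inl b) ↔ G.Adj a.1 b.1)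
    (hH2 : ∀ (a : {z : V // z ≠ v}) (i : Fin (d - 1)),
      H.Adj (Sum.inl a) (Sum.inr i) ↔ (a.1 = w ∨ a.1 = ws i))
    (hH3 : ∀ i j : Fin (d - 1), ¬ H.Adj (Sum.inr i) (Sum.inr j))
    (hG : CycleFree346 G) :
    CycleFree346 H := by
  have hvw : G.Adj v w := by
    rw [← mem_neighborSet, hnbr]
    exact Set.mem_insert w _
  have hvws (i : Fin (d - 1)) : G.Adj v (ws i) := by
    rw [← mem_neighborSet, hnbr]
    exact Set.mem_insert_of_mem w (Set.mem_range_self i)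
  have hS : IsSurgery G v ⟨w, hvw.ne'⟩ (fun i => ⟨ws i, (hvws i).ne'⟩) H :=
    { adj_inl_inl := fun a b => (hH1 a b).mp
      adj_inl_inr := fun a i h => ((hH2 a i).mp h).imp Subtype.ext Subtype.ext
      not_adj_inr_inr := hH3
      adj_w := hvw
      adj_ws := hvws
      ws_injective := fun i j h => hinj (congrArg Subtype.val h) }
  intro a p hp
  obtain ⟨b, c, hc, hl⟩ := hS.exists_isCycle_length hp
  have := hc.three_le_length
  obtain ⟨h3, h4, h6⟩ := hG b c hc
  omega

/-- Lemma 5 surgery (cycle structure): `v` has degree `d` with `3 ≤ d ≤ 7` and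
neighbors `w, w_1, …, w_{d-1}`; `H` is obtained from `G - v` by adding `d-1` new
vertices `v_1, …, v_{d-1}` with `v_i` adjacent exactly to `w` and `w_i`. If `G` has
no cycle of length 3, 4 or 6, then neither does `H`. -/
theorem surgery_cycle_free {V : Type*} [Fintype V] [DecidableEq V]
    (G : SimpleGraph V) [DecidableRel G.Adj] (v : V) (d : ℕ)
    (hd3 : 3 ≤ d) (hd7 : d ≤ 7) (hdeg : G.degree v = d)
    (w : V) (ws : Fin (d - 1) → V)
    (hnbr : G.neighborSet v = insert w (Set.range ws))
    (hinj : Function.Injective ws) (hwne : w ∉ Set.range ws)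
    (H : SimpleGraph ({z : V // z ≠ v} ⊕ Fin (d - 1)))
    (hH1 : ∀ a b : {z : V // z ≠ v}, H.Adj (Sum.inl a) (Sum.inl b) ↔ G.Adj a.1 b.1)
    (hH2 : ∀ (a : {z : V // z ≠ v}) (i : Fin (d - 1)),
      H.Adj (Sum.inl a) (Sum.inr i) ↔ (a.1 = w ∨ a.1 = ws i))
    (hH3 : ∀ i j : Fin (d - 1), ¬ H.Adj (Sum.inr i) (Sum.inr j))
    (hG : CycleFree346 G) :
    CycleFree346 H :=
  surgery_cycle_free_general G v d w ws hnbr hinj H hH1 hH2 hH3 hG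
end

section
/- Let G be a finite simple graph, let v be a vertex of degree 2 with neighbors w and u, and suppose w has degree 3 with neighbors v, x_1 and x_2. Let H be the graph obtained from the induced subgraph G − {v,w} by adding five new vertices v_1, v_2, w_1, w_2 and x whose added edges form exactly the 8-cycle u–v_1–w_1–x_1–x–x_2–w_2–v_2–u. If H is (0,6)-colorable, then G is (0,6)-colorable. -/
/-- The gadget vertices `v₁, w₁, x, w₂, v₂` are `0, 1, 2, 3, 4 : Fin 5`. -/
structure Surgery {V : Type*} (G : SimpleGraph V) (v w u x1 x2 : V)
    (H : SimpleGraph ({z : V // z ≠ v ∧ z ≠ w} ⊕ Fin 5)) : Prop where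
  ne : v ≠ w
  neighborSet_v : G.neighborSet v ⊆ {w, u}
  neighborSet_w : G.neighborSet w ⊆ {v, x1, x2}
  adj_old : ∀ a b : {z : V // z ≠ v ∧ z ≠ w}, G.Adj a b → H.Adj (.inl a) (.inl b)
  adj_v₁ : ∀ a : {z : V // z ≠ v ∧ z ≠ w}, a.1 = u → H.Adj (.inl a) (.inr 0)
  adj_w₁ : ∀ a : {z : V // z ≠ v ∧ z ≠ w}, a.1 = x1 → H.Adj (.inl a) (.inr 1)
  adj_x : ∀ a : {z : V // z ≠ v ∧ z ≠ w}, a.1 = x1 ∨ a.1 = x2 → H.Adj (.inl a) (.inr 2)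
  adj_w₂ : ∀ a : {z : V // z ≠ v ∧ z ≠ w}, a.1 = x2 → H.Adj (.inl a) (.inr 3)
  adj_v₂ : ∀ a : {z : V // z ≠ v ∧ z ≠ w}, a.1 = u → H.Adj (.inl a) (.inr 4)
  adj_v₁_w₁ : H.Adj (.inr 0) (.inr 1)
  adj_w₂_v₂ : H.Adj (.inr 3) (.inr 4)

namespace Surgery

open Function Set Sum

variable {V : Type*} {v w : V} {D : Set ({z : V // z ≠ v ∧ z ≠ w} ⊕ Fin 5)}

def liftClass (v w : V) (D : Set ({z : V // z ≠ v ∧ z ≠ w} ⊕ Fin 5)) : Set V :=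
  {z | (∃ h : z ≠ v ∧ z ≠ w, inl ⟨z, h⟩ ∈ D) ∨ (z = v ∧ (inr 0 ∈ D ∨ inr 4 ∈ D)) ∨
    (z = w ∧ ((inr 0 ∉ D ∧ inr 4 ∉ D) ∨ inr 2 ∈ D))}

theorem mem_liftClass_of_ne {z : V} (hz : z ≠ v ∧ z ≠ w) :
    z ∈ liftClass v w D ↔ inl ⟨z, hz⟩ ∈ D := by
  simp [liftClass, hz]

theorem mem_liftClass_left (hvw : v ≠ w) : v ∈ liftClass v w D ↔ inr 0 ∈ D ∨ inr 4 ∈ D := by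
  simp [liftClass, hvw]

theorem mem_liftClass_right (hvw : v ≠ w) :
    w ∈ liftClass v w D ↔ (inr 0 ∉ D ∧ inr 4 ∉ D) ∨ inr 2 ∈ D := by
  simp [liftClass, hvw.symm]

def contract (v w : V) : {z : V // z ≠ v ∧ z ≠ w} ⊕ Fin 5 → V
  | inl z => z
  | inr i => if i = 0 ∨ i = 4 then v else w

open scoped Classical in
noncomputable def nbrImage (v w x1 : V) (D : Set ({z : V // z ≠ v ∧ z ≠ w} ⊕ Fin 5)) (a b : V) :
    {z : V // z ≠ v ∧ z ≠ w} ⊕ Fin 5 :=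
  if h : b ≠ v ∧ b ≠ w then inl ⟨b, h⟩
  else if b = v then (if inr 0 ∈ D then inr 0 else inr 4)
  else if inr 2 ∈ D then inr 2 else if a = x1 then inr 1 else inr 3

theorem contract_nbrImage (x1 a b : V) : contract v w (nbrImage v w x1 D a b) = b := by
  unfold nbrImage
  split_ifs <;> simp_all [contract]

theorem nbrImage_injective (x1 a : V) : Injective (nbrImage v w x1 D a) :=
  LeftInverse.injective (contract_nbrImage x1 a)

variable {G : SimpleGraph V} {u x1 x2 : V} {H : SimpleGraph ({z : V // z ≠ v ∧ z ≠ w} ⊕ Fin 5)}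

theorem mem_or_mem_liftClass_of_adj_left (S : Surgery G v w u x1 x2 H)
    (hD : ∀ p q, H.Adj p q → p ∈ D ∨ q ∈ D) {b : V} (hvb : G.Adj v b) :
    v ∈ liftClass v w D ∨ b ∈ liftClass v w D := by
  by_cases hbw : b = w
  · subst hbw
    rw [mem_liftClass_left S.ne, mem_liftClass_right S.ne]
    tauto
  have hb : b ≠ v ∧ b ≠ w := ⟨(G.ne_of_adj hvb).symm, hbw⟩
  have hbu : b = u := (S.neighborSet_v hvb).resolve_left hbw
  have := hD _ _ (S.adj_v₁ ⟨b, hb⟩ hbu)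
  rw [mem_liftClass_left S.ne, mem_liftClass_of_ne hb]
  tauto

theorem mem_or_mem_liftClass_of_adj_right (S : Surgery G v w u x1 x2 H)
    (hD : ∀ p q, H.Adj p q → p ∈ D ∨ q ∈ D) {b : V} (hwb : G.Adj w b) :
    w ∈ liftClass v w D ∨ b ∈ liftClass v w D := by
  by_cases hbv : b = v
  · subst hbv
    rw [mem_liftClass_left S.ne, mem_liftClass_right S.ne]
    tauto
  have hb : b ≠ v ∧ b ≠ w := ⟨hbv, (G.ne_of_adj hwb).symm⟩
  have hbx : b = x1 ∨ b = x2 := (S.neighborSet_w hwb).resolve_left hbv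
  have := hD _ _ (S.adj_x ⟨b, hb⟩ hbx)
  rw [mem_liftClass_right S.ne, mem_liftClass_of_ne hb]
  tauto

theorem liftClass_cover (S : Surgery G v w u x1 x2 H) (hD : ∀ p q, H.Adj p q → p ∈ D ∨ q ∈ D)
    (a b : V) (hab : G.Adj a b) : a ∈ liftClass v w D ∨ b ∈ liftClass v w D := by
  by_cases ha : a = v ∨ a = w
  · obtain rfl | rfl := ha
    exacts [S.mem_or_mem_liftClass_of_adj_left hD hab,
      S.mem_or_mem_liftClass_of_adj_right hD hab]
  by_cases hb : b = v ∨ b = w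
  · obtain rfl | rfl := hb
    exacts [(S.mem_or_mem_liftClass_of_adj_left hD hab.symm).symm,
      (S.mem_or_mem_liftClass_of_adj_right hD hab.symm).symm]
  have ha' : a ≠ v ∧ a ≠ w := not_or.1 ha
  have hb' : b ≠ v ∧ b ≠ w := not_or.1 hb
  simpa only [mem_liftClass_of_ne ha', mem_liftClass_of_ne hb'] using
    hD _ _ (S.adj_old ⟨a, ha'⟩ ⟨b, hb'⟩ hab)

theorem nbrImage_mem (S : Surgery G v w u x1 x2 H) (hD : ∀ p q, H.Adj p q → p ∈ D ∨ q ∈ D)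
    (a : {z : V // z ≠ v ∧ z ≠ w}) {b : V} (hb : b ∈ liftClass v w D) (hab : G.Adj a b) :
    nbrImage v w x1 D a b ∈ D ∧ H.Adj (inl a) (nbrImage v w x1 D a b) := by
  by_cases hold : b ≠ v ∧ b ≠ w
  · rw [nbrImage, dif_pos hold]
    exact ⟨(mem_liftClass_of_ne hold).1 hb, S.adj_old a ⟨b, hold⟩ hab⟩
  obtain rfl | rfl : b = v ∨ b = w := by tauto
  · have hau : a.1 = u := (S.neighborSet_v hab.symm).resolve_left a.2.2
    rw [mem_liftClass_left S.ne] at hb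
    rw [nbrImage, dif_neg hold, if_pos rfl]
    split_ifs with h0
    · exact ⟨h0, S.adj_v₁ a hau⟩
    · exact ⟨hb.resolve_left h0, S.adj_v₂ a hau⟩
  · have hax : a.1 = x1 ∨ a.1 = x2 := (S.neighborSet_w hab.symm).resolve_left a.2.1
    rw [mem_liftClass_right S.ne] at hb
    rw [nbrImage, dif_neg hold, if_neg S.ne.symm]
    split_ifs with h2 hx1
    · exact ⟨h2, S.adj_x a hax⟩
    · exact ⟨(hD _ _ S.adj_v₁_w₁).resolve_left (hb.resolve_right h2).1, S.adj_w₁ a hx1⟩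
    · exact ⟨(hD _ _ S.adj_w₂_v₂).resolve_right (hb.resolve_right h2).2,
        S.adj_w₂ a (hax.resolve_left hx1)⟩

theorem ncard_adj_liftClass_le [Finite V] (S : Surgery G v w u x1 x2 H)
    (hD : ∀ p q, H.Adj p q → p ∈ D ∨ q ∈ D) (a : {z : V // z ≠ v ∧ z ≠ w}) :
    {b | b ∈ liftClass v w D ∧ G.Adj a b}.ncard ≤ {p | p ∈ D ∧ H.Adj (inl a) p}.ncard :=
  ncard_le_ncard_of_injOn _ (fun _ hb ↦ S.nbrImage_mem hD a hb.1 hb.2)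
    (nbrImage_injective x1 a).injOn

theorem coloring0K_liftClass [Finite V] (S : Surgery G v w u x1 x2 H) {k : ℕ} (hk : 3 ≤ k)
    (hD : Coloring0K H k D) : Coloring0K G k (liftClass v w D) := by
  refine ⟨S.liftClass_cover hD.1, fun a ha ↦ ?_⟩
  by_cases hold : a ≠ v ∧ a ≠ w
  · exact (S.ncard_adj_liftClass_le hD.1 ⟨a, hold⟩).trans
      (hD.2 _ ((mem_liftClass_of_ne hold).1 ha))
  obtain rfl | rfl : a = v ∨ a = w := by tauto
  · calc _ ≤ ({w, u} : Set V).ncard := ncard_le_ncard fun b hb ↦ S.neighborSet_v hb.2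
      _ ≤ ({u} : Set V).ncard + 1 := ncard_insert_le _ _
      _ ≤ k := by rw [ncard_singleton]; omega
  · calc _ ≤ ({v, x1, x2} : Set V).ncard := ncard_le_ncard fun b hb ↦ S.neighborSet_w hb.2
      _ ≤ ({x2} : Set V).ncard + 1 + 1 := (ncard_insert_le _ _).trans (by grw [ncard_insert_le])
      _ ≤ k := by rw [ncard_singleton]; omega

end Surgery

theorem three_vertex_surgery_colorable_general {V : Type*} [Fintype V]
    (G : SimpleGraph V) (v w u x1 x2 : V)
    (hnv : G.neighborSet v = {w, u})
    (hnw : G.neighborSet w = {v, x1, x2})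
    (H : SimpleGraph ({z : V // z ≠ v ∧ z ≠ w} ⊕ Fin 5))
    (hH1 : ∀ a b : {z : V // z ≠ v ∧ z ≠ w},
      H.Adj (Sum.inl a) (Sum.inl b) ↔ G.Adj a.1 b.1)
    (hH2 : ∀ (a : {z : V // z ≠ v ∧ z ≠ w}) (i : Fin 5),
      H.Adj (Sum.inl a) (Sum.inr i) ↔
        ((i = 0 ∧ a.1 = u) ∨ (i = 1 ∧ a.1 = x1) ∨ (i = 2 ∧ (a.1 = x1 ∨ a.1 = x2)) ∨
          (i = 3 ∧ a.1 = x2) ∨ (i = 4 ∧ a.1 = u)))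
    (hH3 : ∀ i j : Fin 5, H.Adj (Sum.inr i) (Sum.inr j) ↔
      ((i = 0 ∧ j = 1) ∨ (i = 1 ∧ j = 0) ∨ (i = 3 ∧ j = 4) ∨ (i = 4 ∧ j = 3)))
    (hcol : ∃ D, Coloring0K H 6 D) :
    ∃ D : Set V, Coloring0K G 6 D := by
  obtain ⟨D, hD⟩ := hcol
  have S : Surgery G v w u x1 x2 H :=
    { ne := G.ne_of_adj (by simp [← G.mem_neighborSet, hnv])
      neighborSet_v := hnv.subset
      neighborSet_w := hnw.subset
      adj_old := fun a b h ↦ (hH1 a b).2 h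
      adj_v₁ := fun a h ↦ (hH2 a 0).2 (by simp [h])
      adj_w₁ := fun a h ↦ (hH2 a 1).2 (by simp [h])
      adj_x := fun a h ↦ (hH2 a 2).2 (by simp [h])
      adj_w₂ := fun a h ↦ (hH2 a 3).2 (by simp [h])
      adj_v₂ := fun a h ↦ (hH2 a 4).2 (by simp [h])
      adj_v₁_w₁ := (hH3 0 1).2 (by simp)
      adj_w₂_v₂ := (hH3 3 4).2 (by simp) }
  exact ⟨_, S.coloring0K_liftClass (by norm_num) hD⟩

/-- Lemma 6 surgery (coloring transfer): `v` is a 2-vertex with neighbors `w` and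
`u`, and `w` is a 3-vertex with neighbors `v`, `x₁`, `x₂`. `H` is obtained from
`G - {v, w}` by adding five new vertices `v₁, v₂, w₁, w₂, x` (encoded as
`Fin 5` with `0 = v₁`, `1 = w₁`, `2 = x`, `3 = w₂`, `4 = v₂`) whose added edges
form exactly the 8-cycle `u v₁ w₁ x₁ x x₂ w₂ v₂`. If `H` is (0,6)-colorable then
so is `G`. -/
theorem three_vertex_surgery_colorable {V : Type*} [Fintype V] [DecidableEq V]
    (G : SimpleGraph V) [DecidableRel G.Adj] (v w u x1 x2 : V)
    (hdv : G.degree v = 2) (hnv : G.neighborSet v = {w, u})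
    (hdw : G.degree w = 3) (hnw : G.neighborSet w = {v, x1, x2})
    (H : SimpleGraph ({z : V // z ≠ v ∧ z ≠ w} ⊕ Fin 5))
    (hH1 : ∀ a b : {z : V // z ≠ v ∧ z ≠ w},
      H.Adj (Sum.inl a) (Sum.inl b) ↔ G.Adj a.1 b.1)
    (hH2 : ∀ (a : {z : V // z ≠ v ∧ z ≠ w}) (i : Fin 5),
      H.Adj (Sum.inl a) (Sum.inr i) ↔
        ((i = 0 ∧ a.1 = u) ∨ (i = 1 ∧ a.1 = x1) ∨ (i = 2 ∧ (a.1 = x1 ∨ a.1 = x2)) ∨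
          (i = 3 ∧ a.1 = x2) ∨ (i = 4 ∧ a.1 = u)))
    (hH3 : ∀ i j : Fin 5, H.Adj (Sum.inr i) (Sum.inr j) ↔
      ((i = 0 ∧ j = 1) ∨ (i = 1 ∧ j = 0) ∨ (i = 3 ∧ j = 4) ∨ (i = 4 ∧ j = 3)))
    (hcol : ∃ D, Coloring0K H 6 D) :
    ∃ D : Set V, Coloring0K G 6 D :=
  three_vertex_surgery_colorable_general G v w u x1 x2 hnv hnw H hH1 hH2 hH3 hcol
end

section
/- Let G be a finite simple graph containing five vertices u, v_0, x_0, y_0, v_1 forming the 5-cycle u–v_0–x_0–y_0–v_1–u, such that each of u, x_0, y_0 has degree exactly 2 in G (so their only neighbors are their two neighbors on this cycle). Then for every (0,6)-coloring c of G there exists a (0,6)-coloring c' of G agreeing with c on all vertices outside {u, x_0, y_0} such that, for each i ∈ {0,1}: the number of neighbors of v_i lying in the k-class under c' is at most the number of neighbors of v_i lying in the k-class under c, and if v_i lies in the k-class then v_i has at least one neighbor in the 0-class under c'. -/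
/-!
Put a vertex `w` of the face into the 0-class, choosing it so that all its neighbors are in the
k-class and it is adjacent to every big vertex `vᵢ` lying in the k-class. Since `u`, `x₀`, `y₀`
have degree 2, such a `w` exists unless neither `vᵢ` is in the k-class: take `u` if both are,
and otherwise the neighbor `x₀` or `y₀` of the one that is, whose other neighbor is then forced
into the k-class by the edge to the big vertex in the 0-class. Moving `w` out of the k-class
keeps the coloring proper and only lowers k-degrees.
-/

theorem SimpleGraph.eq_or_eq_of_adj_of_degree_eq_two {V : Type*} {G : SimpleGraph V}
    {w a b c : V} [Fintype (G.neighborSet w)] (hd : G.degree w = 2)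
    (ha : G.Adj w a) (hb : G.Adj w b) (hab : a ≠ b) (hc : G.Adj w c) : c = a ∨ c = b := by
  classical
  have hsub : ({a, b} : Finset V) ⊆ G.neighborFinset w := by
    simp [Finset.insert_subset_iff, ha, hb]
  have heq : ({a, b} : Finset V) = G.neighborFinset w :=
    Finset.eq_of_subset_of_card_le hsub
      (by rw [G.card_neighborFinset_eq_degree, hd, Finset.card_pair hab])
  simpa [← heq] using (G.mem_neighborFinset w c).2 hc

section Coloring0K

variable {V : Type*} {G : SimpleGraph V} {D : Set V}

theorem ncard_adj_mem_mono [Finite V] {D' : Set V} (h : D' ⊆ D) (z : V) :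
    {b | b ∈ D' ∧ G.Adj z b}.ncard ≤ {b | b ∈ D ∧ G.Adj z b}.ncard :=
  Set.ncard_le_ncard fun _ hb => ⟨h hb.1, hb.2⟩

theorem Coloring0K.diff_singleton [Finite V] {k : ℕ} {w : V} (hD : Coloring0K G k D)
    (hw : ∀ b, G.Adj w b → b ∈ D) : Coloring0K G k (D \ {w}) := by
  refine ⟨fun a b hab => ?_,
    fun a ha => (ncard_adj_mem_mono Set.sdiff_subset a).trans (hD.2 a ha.1)⟩
  by_cases ha : a = w
  · subst ha
    exact Or.inr ⟨hw b hab, hab.ne.symm⟩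
  by_cases hb : b = w
  · subst hb
    exact Or.inl ⟨hw a hab.symm, hab.ne⟩
  exact (hD.1 a b hab).imp (fun h => ⟨h, ha⟩) (fun h => ⟨h, hb⟩)

theorem exists_face_vertex_to_recolor {u v0 x0 y0 v1 : V}
    (hcover : ∀ a b, G.Adj a b → a ∈ D ∨ b ∈ D)
    (e1 : G.Adj u v0) (e2 : G.Adj v0 x0) (e4 : G.Adj y0 v1) (e5 : G.Adj v1 u)
    (hu : ∀ b, G.Adj u b → b = v0 ∨ b = v1) (hx0 : ∀ b, G.Adj x0 b → b = v0 ∨ b = y0)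
    (hy0 : ∀ b, G.Adj y0 b → b = x0 ∨ b = v1) :
    (v0 ∉ D ∧ v1 ∉ D) ∨ ∃ w, (∀ b, G.Adj w b → b ∈ D) ∧
      (w = u ∨ w = x0 ∨ w = y0) ∧ ∀ z, z = v0 ∨ z = v1 → z ∈ D → G.Adj z w := by
  by_cases hv0 : v0 ∈ D <;> by_cases hv1 : v1 ∈ D
  · refine .inr ⟨u, fun b hb => ?_, .inl rfl, ?_⟩
    · rcases hu b hb with rfl | rfl <;> assumption
    · rintro z (rfl | rfl) -
      exacts [e1.symm, e5]
  · have hy0D : y0 ∈ D := (hcover y0 v1 e4).resolve_right hv1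
    refine .inr ⟨x0, fun b hb => ?_, .inr (.inl rfl), ?_⟩
    · rcases hx0 b hb with rfl | rfl <;> assumption
    · rintro z (rfl | rfl) hz
      exacts [e2, absurd hz hv1]
  · have hx0D : x0 ∈ D := (hcover v0 x0 e2).resolve_left hv0
    refine .inr ⟨y0, fun b hb => ?_, .inr (.inr rfl), ?_⟩
    · rcases hy0 b hb with rfl | rfl <;> assumption
    · rintro z (rfl | rfl) hz
      exacts [absurd hz hv0, e4.symm]
  · exact .inl ⟨hv0, hv1⟩

end Coloring0K

theorem special_face_recoloring_general {V : Type*} [Fintype V]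
    (G : SimpleGraph V) [DecidableRel G.Adj] (u v0 x0 y0 v1 : V)
    (hnodup : ([u, v0, x0, y0, v1] : List V).Nodup)
    (e1 : G.Adj u v0) (e2 : G.Adj v0 x0) (e3 : G.Adj x0 y0)
    (e4 : G.Adj y0 v1) (e5 : G.Adj v1 u)
    (hdu : G.degree u = 2) (hdx0 : G.degree x0 = 2) (hdy0 : G.degree y0 = 2)
    (D : Set V) (hD : Coloring0K G 6 D) :
    ∃ D' : Set V, Coloring0K G 6 D' ∧
      (∀ z : V, z ≠ u → z ≠ x0 → z ≠ y0 → (z ∈ D' ↔ z ∈ D)) ∧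
      (∀ z : V, z = v0 ∨ z = v1 →
        {b | b ∈ D' ∧ G.Adj z b}.ncard ≤ {b | b ∈ D ∧ G.Adj z b}.ncard ∧
          (z ∈ D' → ∃ b, G.Adj z b ∧ b ∉ D')) := by
  simp only [List.nodup_cons, List.mem_cons, List.not_mem_nil, or_false, not_or,
    List.nodup_nil, and_true] at hnodup
  obtain ⟨-, ⟨-, hv0y0, hv0v1⟩, ⟨-, hx0v1⟩, -⟩ := hnodup
  rcases exists_face_vertex_to_recolor hD.1 e1 e2 e4 e5
      (fun _ => G.eq_or_eq_of_adj_of_degree_eq_two hdu e1 e5.symm hv0v1)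
      (fun _ => G.eq_or_eq_of_adj_of_degree_eq_two hdx0 e2.symm e3 hv0y0)
      (fun _ => G.eq_or_eq_of_adj_of_degree_eq_two hdy0 e3.symm e4 hx0v1) with
    ⟨hv0, hv1⟩ | ⟨w, hwD, hw, hadj⟩
  · refine ⟨D, hD, fun _ _ _ _ => Iff.rfl, ?_⟩
    rintro z (rfl | rfl)
    exacts [⟨le_rfl, (absurd · hv0)⟩, ⟨le_rfl, (absurd · hv1)⟩]
  · refine ⟨D \ {w}, hD.diff_singleton hwD, fun z hzu hzx hzy => ?_, fun z hz => ?_⟩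
    · have hzw : z ≠ w := by rintro rfl; tauto
      simp [hzw]
    · exact ⟨ncard_adj_mem_mono Set.sdiff_subset z,
        fun h => ⟨w, hadj z hz h.1, fun hw' => hw'.2 rfl⟩⟩

/-- Recoloring lemma, special-face case: the five distinct vertices
`u, v₀, x₀, y₀, v₁` form the 5-cycle `u v₀ x₀ y₀ v₁`, and `u`, `x₀`, `y₀` all
have degree exactly 2 in `G`. Every (0,6)-coloring of `G` can be modified only on
`{u, x₀, y₀}` so that each `vᵢ` has no more neighbors in the k-class than before
and, if `vᵢ` is in the k-class, it has a neighbor in the 0-class. -/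
theorem special_face_recoloring {V : Type*} [Fintype V] [DecidableEq V]
    (G : SimpleGraph V) [DecidableRel G.Adj] (u v0 x0 y0 v1 : V)
    (hnodup : ([u, v0, x0, y0, v1] : List V).Nodup)
    (e1 : G.Adj u v0) (e2 : G.Adj v0 x0) (e3 : G.Adj x0 y0)
    (e4 : G.Adj y0 v1) (e5 : G.Adj v1 u)
    (hdu : G.degree u = 2) (hdx0 : G.degree x0 = 2) (hdy0 : G.degree y0 = 2)
    (D : Set V) (hD : Coloring0K G 6 D) :
    ∃ D' : Set V, Coloring0K G 6 D' ∧
      (∀ z : V, z ≠ u → z ≠ x0 → z ≠ y0 → (z ∈ D' ↔ z ∈ D)) ∧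
      (∀ z : V, z = v0 ∨ z = v1 →
        {b | b ∈ D' ∧ G.Adj z b}.ncard ≤ {b | b ∈ D ∧ G.Adj z b}.ncard ∧
          (z ∈ D' → ∃ b, G.Adj z b ∧ b ∉ D')) :=
  special_face_recoloring_general G u v0 x0 y0 v1 hnodup e1 e2 e3 e4 e5 hdu hdx0 hdy0 D hD
end

section
/- Let G be a finite simple graph containing ten vertices u, v_0, v_1, v_2, x_0, y_0, x_1, y_1, x_2, y_2 such that u has degree exactly 3 with neighbors v_0, v_1, v_2, each x_i and each y_i has degree exactly 2 in G, and the edges among these vertices form exactly the three 5-cycles u–v_0–x_0–y_0–v_1–u, u–v_1–x_1–y_1–v_2–u and u–v_2–x_2–y_2–v_0–u. Then for every (0,6)-coloring c of G there exists a (0,6)-coloring c' of G agreeing with c on all vertices outside {u, x_0, y_0, x_1, y_1, x_2, y_2} such that, for each i ∈ {0,1,2}: the number of neighbors of v_i lying in the k-class under c' is at most the number of neighbors of v_i lying in the k-class under c, and if v_i lies in the k-class then v_i has at least one neighbor in the 0-class under c'. -/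
theorem SimpleGraph.neighborSet_eq_pair_of_degree_eq_two {V : Type*} {G : SimpleGraph V}
    {a b c : V} [Fintype (G.neighborSet a)] (hbc : b ≠ c) (hab : G.Adj a b) (hac : G.Adj a c)
    (h : G.degree a = 2) : G.neighborSet a = {b, c} := by
  refine (Set.eq_of_subset_of_ncard_le (by simp [Set.insert_subset_iff, hab, hac]) ?_).symm
  rw [Set.ncard_eq_toFinset_card', Set.toFinset_card, G.card_neighborSet_eq_degree, h,
    Set.ncard_pair hbc]

section Recoloring

variable {V : Type*} {G : SimpleGraph V} {k : ℕ}

theorem ncard_adj_mem_le_of_subset [Finite V] {D D' : Set V} (h : D' ⊆ D) (z : V) :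
    {b | b ∈ D' ∧ G.Adj z b}.ncard ≤ {b | b ∈ D ∧ G.Adj z b}.ncard :=
  Set.ncard_le_ncard fun _ hb => ⟨h hb.1, hb.2⟩

theorem Coloring0K.diff [Finite V] {D R : Set V} (hD : Coloring0K G k D)
    (hR : ∀ a ∈ R, ∀ b, G.Adj a b → b ∈ D \ R) : Coloring0K G k (D \ R) := by
  refine ⟨fun a b hab => ?_, fun a ha => ?_⟩
  · by_cases haR : a ∈ R
    · exact Or.inr (hR a haR b hab)
    by_cases hbR : b ∈ R
    · exact Or.inl (hR b hbR a hab.symm)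
    exact (hD.1 a b hab).imp (fun h => ⟨h, haR⟩) (fun h => ⟨h, hbR⟩)
  · exact (ncard_adj_mem_le_of_subset Set.sdiff_subset a).trans (hD.2 a ha.1)

/-- The faces are the 5-cycles `u (v i) (x i) (y i) (v (i + 1))`, with `i + 1` taken mod 3.
-/
structure SpecialConfiguration (G : SimpleGraph V) (u : V) (v x y : Fin 3 → V) : Prop where
  neighborSet_u : G.neighborSet u = Set.range v
  neighborSet_x (i : Fin 3) : G.neighborSet (x i) = {v i, y i}
  neighborSet_y (i : Fin 3) : G.neighborSet (y i) = {x i, v (i + 1)}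
  u_ne_x (i : Fin 3) : u ≠ x i
  u_ne_y (i : Fin 3) : u ≠ y i
  v_ne_x (i j : Fin 3) : v i ≠ x j
  v_ne_y (i j : Fin 3) : v i ≠ y j
  x_ne_y (i j : Fin 3) : x i ≠ y j
  x_injective : Function.Injective x
  y_injective : Function.Injective y

def recoloredSet (D : Set V) (u : V) (v x y : Fin 3 → V) : Set V :=
  {z | (z = u ∧ ∀ i, v i ∈ D) ∨
    ∃ i, (z = x i ∧ v i ∈ D ∧ v (i + 1) ∉ D) ∨ (z = y i ∧ v i ∉ D ∧ v (i + 1) ∈ D)}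

theorem recoloredSet_subset (D : Set V) (u : V) (v x y : Fin 3 → V) :
    recoloredSet D u v x y ⊆ insert u (Set.range x ∪ Set.range y) := by
  rintro z (⟨rfl, -⟩ | ⟨i, ⟨rfl, -⟩ | ⟨rfl, -⟩⟩)
  exacts [Set.mem_insert _ _, .inr (.inl ⟨i, rfl⟩), .inr (.inr ⟨i, rfl⟩)]

theorem fin_three_eq_or_eq_add_one_or_eq_sub_one (i j : Fin 3) :
    j = i ∨ j = i + 1 ∨ j = i - 1 := by
  revert i j; decide

namespace SpecialConfiguration

variable {u : V} {v x y : Fin 3 → V} (hC : SpecialConfiguration G u v x y) {D : Set V}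
include hC

theorem adj_u_v (i : Fin 3) : G.Adj u (v i) :=
  show v i ∈ G.neighborSet u from hC.neighborSet_u ▸ Set.mem_range_self i

theorem adj_x_v (i : Fin 3) : G.Adj (x i) (v i) :=
  show v i ∈ G.neighborSet (x i) from hC.neighborSet_x i ▸ Set.mem_insert _ _

theorem adj_y_v (i : Fin 3) : G.Adj (y i) (v (i + 1)) :=
  show v (i + 1) ∈ G.neighborSet (y i) from hC.neighborSet_y i ▸ Set.mem_insert_of_mem _ rfl

theorem v_not_mem_recoloredSet (j : Fin 3) : v j ∉ recoloredSet D u v x y := by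
  rintro (⟨h, -⟩ | ⟨i, ⟨h, -⟩ | ⟨h, -⟩⟩)
  exacts [(hC.adj_u_v j).ne h.symm, hC.v_ne_x j i h, hC.v_ne_y j i h]

theorem x_mem_recoloredSet_iff (i : Fin 3) :
    x i ∈ recoloredSet D u v x y ↔ v i ∈ D ∧ v (i + 1) ∉ D := by
  refine ⟨?_, fun h => .inr ⟨i, .inl ⟨rfl, h⟩⟩⟩
  rintro (⟨h, -⟩ | ⟨j, ⟨h, hj⟩ | ⟨h, -⟩⟩)
  exacts [(hC.u_ne_x i h.symm).elim, hC.x_injective h ▸ hj, (hC.x_ne_y i j h).elim]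

theorem y_mem_recoloredSet_iff (i : Fin 3) :
    y i ∈ recoloredSet D u v x y ↔ v i ∉ D ∧ v (i + 1) ∈ D := by
  refine ⟨?_, fun h => .inr ⟨i, .inr ⟨rfl, h⟩⟩⟩
  rintro (⟨h, -⟩ | ⟨j, ⟨h, -⟩ | ⟨h, hj⟩⟩)
  exacts [(hC.u_ne_y i h.symm).elim, (hC.x_ne_y j i h.symm).elim, hC.y_injective h ▸ hj]

theorem adj_recoloredSet_mem_diff (hcover : ∀ a b, G.Adj a b → a ∈ D ∨ b ∈ D) :
    ∀ a ∈ recoloredSet D u v x y, ∀ b, G.Adj a b → b ∈ D \ recoloredSet D u v x y := by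
  rintro a (⟨rfl, hall⟩ | ⟨i, ⟨rfl, hvi, hvi'⟩ | ⟨rfl, hvi, hvi'⟩⟩) b hab
  · obtain ⟨j, rfl⟩ : b ∈ Set.range v := hC.neighborSet_u ▸ hab
    exact ⟨hall j, hC.v_not_mem_recoloredSet j⟩
  · obtain rfl | rfl : b ∈ ({v i, y i} : Set V) := hC.neighborSet_x i ▸ hab
    · exact ⟨hvi, hC.v_not_mem_recoloredSet i⟩
    · exact ⟨(hcover _ _ (hC.adj_y_v i)).resolve_right hvi',
        fun h => ((hC.y_mem_recoloredSet_iff i).1 h).1 hvi⟩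
  · obtain rfl | rfl : b ∈ ({x i, v (i + 1)} : Set V) := hC.neighborSet_y i ▸ hab
    · exact ⟨(hcover _ _ (hC.adj_x_v i)).resolve_right hvi,
        fun h => ((hC.x_mem_recoloredSet_iff i).1 h).2 hvi'⟩
    · exact ⟨hvi', hC.v_not_mem_recoloredSet _⟩

theorem exists_adj_mem_recoloredSet {i : Fin 3} (hi : v i ∈ D) :
    ∃ b, G.Adj (v i) b ∧ b ∈ recoloredSet D u v x y := by
  by_cases hall : ∀ j, v j ∈ D
  · exact ⟨u, (hC.adj_u_v i).symm, .inl ⟨rfl, hall⟩⟩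
  by_cases hnext : v (i + 1) ∈ D
  · have hprev : v (i - 1) ∉ D := fun hprev => hall fun j => by
      rcases fin_three_eq_or_eq_add_one_or_eq_sub_one i j with rfl | rfl | rfl <;> assumption
    refine ⟨y (i - 1), ?_, .inr ⟨i - 1, .inr ⟨rfl, hprev, by rwa [sub_add_cancel]⟩⟩⟩
    simpa using (hC.adj_y_v (i - 1)).symm
  · exact ⟨x i, (hC.adj_x_v i).symm, .inr ⟨i, .inl ⟨rfl, hi, hnext⟩⟩⟩

theorem exists_recoloring [Finite V] (hD : Coloring0K G k D) :
    ∃ D' ⊆ D, Coloring0K G k D' ∧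
      (∀ z ∉ insert u (Set.range x ∪ Set.range y), z ∈ D' ↔ z ∈ D) ∧
      ∀ i, v i ∈ D' → ∃ b, G.Adj (v i) b ∧ b ∉ D' := by
  refine ⟨D \ recoloredSet D u v x y, Set.sdiff_subset,
    hD.diff (hC.adj_recoloredSet_mem_diff hD.1), fun z hz => ?_, fun i hi => ?_⟩
  · exact and_iff_left fun h => hz (recoloredSet_subset D u v x y h)
  · obtain ⟨b, hib, hb⟩ := hC.exists_adj_mem_recoloredSet hi.1
    exact ⟨b, hib, fun h => h.2 hb⟩

end SpecialConfiguration

end Recoloring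

theorem special_configuration_recoloring_general {V : Type*} [Fintype V]
    (G : SimpleGraph V) [DecidableRel G.Adj]
    (u v0 v1 v2 x0 y0 x1 y1 x2 y2 : V)
    (hnodup : ([u, v0, v1, v2, x0, y0, x1, y1, x2, y2] : List V).Nodup)
    (hnu : G.neighborSet u = {v0, v1, v2})
    (e01 : G.Adj v0 x0) (e02 : G.Adj x0 y0) (e03 : G.Adj y0 v1)
    (e11 : G.Adj v1 x1) (e12 : G.Adj x1 y1) (e13 : G.Adj y1 v2)
    (e21 : G.Adj v2 x2) (e22 : G.Adj x2 y2) (e23 : G.Adj y2 v0)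
    (hdx0 : G.degree x0 = 2) (hdy0 : G.degree y0 = 2)
    (hdx1 : G.degree x1 = 2) (hdy1 : G.degree y1 = 2)
    (hdx2 : G.degree x2 = 2) (hdy2 : G.degree y2 = 2)
    (D : Set V) (hD : Coloring0K G 6 D) :
    ∃ D' : Set V, Coloring0K G 6 D' ∧
      (∀ z : V, z ≠ u → z ≠ x0 → z ≠ y0 → z ≠ x1 → z ≠ y1 → z ≠ x2 → z ≠ y2 →
        (z ∈ D' ↔ z ∈ D)) ∧
      (∀ z : V, z = v0 ∨ z = v1 ∨ z = v2 →
        {b | b ∈ D' ∧ G.Adj z b}.ncard ≤ {b | b ∈ D ∧ G.Adj z b}.ncard ∧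
          (z ∈ D' → ∃ b, G.Adj z b ∧ b ∉ D')) := by
  simp only [List.nodup_cons, List.mem_cons, List.not_mem_nil, or_false, List.nodup_nil,
    and_true, not_or] at hnodup
  have hx0 := G.neighborSet_eq_pair_of_degree_eq_two (by grind) e01.symm e02 hdx0
  have hx1 := G.neighborSet_eq_pair_of_degree_eq_two (by grind) e11.symm e12 hdx1
  have hx2 := G.neighborSet_eq_pair_of_degree_eq_two (by grind) e21.symm e22 hdx2
  have hy0 := G.neighborSet_eq_pair_of_degree_eq_two (by grind) e02.symm e03 hdy0
  have hy1 := G.neighborSet_eq_pair_of_degree_eq_two (by grind) e12.symm e13 hdy1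
  have hy2 := G.neighborSet_eq_pair_of_degree_eq_two (by grind) e22.symm e23 hdy2
  have hC : SpecialConfiguration G u ![v0, v1, v2] ![x0, x1, x2] ![y0, y1, y2] := by
    refine ⟨?_, ?_, ?_, ?_, ?_, ?_, ?_, ?_, ?_, ?_⟩ <;>
      simp [Fin.forall_fin_succ, Function.Injective, Matrix.range_cons, *] <;> grind
  obtain ⟨D', hD'D, hD', hfix, hv⟩ := hC.exists_recoloring hD
  refine ⟨D', hD', fun z hzu hzx0 hzy0 hzx1 hzy1 hzx2 hzy2 => hfix z ?_,
    fun z hz => ⟨?_, ?_⟩⟩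
  · simp [hzu, hzx0, hzy0, hzx1, hzy1, hzx2, hzy2]
  · exact ncard_adj_mem_le_of_subset hD'D z
  · rcases hz with rfl | rfl | rfl
    exacts [hv 0, hv 1, hv 2]

/-- Recoloring lemma, special-configuration case: ten distinct vertices
`u, v₀, v₁, v₂, x₀, y₀, x₁, y₁, x₂, y₂` such that `u` has degree exactly 3 with
neighbors `v₀, v₁, v₂`, each `xᵢ` and `yᵢ` has degree exactly 2, and the edges
among these vertices form exactly the three 5-cycles `u v₀ x₀ y₀ v₁`,
`u v₁ x₁ y₁ v₂` and `u v₂ x₂ y₂ v₀` (the degree conditions together with the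
listed edges and the non-adjacency of `v₀, v₁, v₂` express exactness). Every
(0,6)-coloring of `G` can be modified only on `{u, x₀, y₀, x₁, y₁, x₂, y₂}` so
that each `vᵢ` has no more neighbors in the k-class than before and, if `vᵢ` is
in the k-class, it has a neighbor in the 0-class. -/
theorem special_configuration_recoloring {V : Type*} [Fintype V] [DecidableEq V]
    (G : SimpleGraph V) [DecidableRel G.Adj]
    (u v0 v1 v2 x0 y0 x1 y1 x2 y2 : V)
    (hnodup : ([u, v0, v1, v2, x0, y0, x1, y1, x2, y2] : List V).Nodup)
    (hdu : G.degree u = 3) (hnu : G.neighborSet u = {v0, v1, v2})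
    (e01 : G.Adj v0 x0) (e02 : G.Adj x0 y0) (e03 : G.Adj y0 v1)
    (e11 : G.Adj v1 x1) (e12 : G.Adj x1 y1) (e13 : G.Adj y1 v2)
    (e21 : G.Adj v2 x2) (e22 : G.Adj x2 y2) (e23 : G.Adj y2 v0)
    (hdx0 : G.degree x0 = 2) (hdy0 : G.degree y0 = 2)
    (hdx1 : G.degree x1 = 2) (hdy1 : G.degree y1 = 2)
    (hdx2 : G.degree x2 = 2) (hdy2 : G.degree y2 = 2)
    (hna01 : ¬ G.Adj v0 v1) (hna12 : ¬ G.Adj v1 v2) (hna02 : ¬ G.Adj v0 v2)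
    (D : Set V) (hD : Coloring0K G 6 D) :
    ∃ D' : Set V, Coloring0K G 6 D' ∧
      (∀ z : V, z ≠ u → z ≠ x0 → z ≠ y0 → z ≠ x1 → z ≠ y1 → z ≠ x2 → z ≠ y2 →
        (z ∈ D' ↔ z ∈ D)) ∧
      (∀ z : V, z = v0 ∨ z = v1 ∨ z = v2 →
        {b | b ∈ D' ∧ G.Adj z b}.ncard ≤ {b | b ∈ D ∧ G.Adj z b}.ncard ∧
          (z ∈ D' → ∃ b, G.Adj z b ∧ b ∉ D')) :=
  special_configuration_recoloring_general G u v0 v1 v2 x0 y0 x1 y1 x2 y2 hnodup hnu e01 e02 e03 e11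
    e12 e13 e21 e22 e23 hdx0 hdy0 hdx1 hdy1 hdx2 hdy2 D hD
end

section
/- Let k ≥ 1 be an integer and let G be a finite simple graph that is not (0,k)-colorable. Let v be a vertex of G of degree 2 with neighbors u_1 and u_5, and suppose the induced subgraph G − v is (0,k)-colorable. Then in every (0,k)-coloring of G − v, exactly one of u_1, u_5 lies in the 0-class and the other lies in the k-class, and the one lying in the k-class has exactly k of its neighbors in the k-class. -/
/-! A (0,k)-coloring `D` of `G - v` that violates the conclusion extends to `G`, which is
impossible. If both neighbours of `v` lie in `D`, put `v` in the 0-class. Otherwise put `v` in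
the k-class: this is fine when no neighbour of `v` is in `D`, and also when exactly one is and
it has fewer than `k` neighbours in `D`, since `v` then has one k-neighbour and `1 ≤ k`. -/

lemma SimpleGraph.setOf_mem_insert_and_adj_of_not_adj {V : Type*} {G : SimpleGraph V}
    {D : Set V} {a v : V} (hav : ¬ G.Adj a v) :
    {b | b ∈ insert v D ∧ G.Adj a b} = {b | b ∈ D ∧ G.Adj a b} := by
  ext b
  simp only [Set.mem_ofPred_eq, Set.mem_insert_iff, and_congr_left_iff, or_iff_right_iff_imp]
  exact fun hab hb => absurd (hb ▸ hab) hav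

lemma SimpleGraph.setOf_mem_insert_and_adj_of_adj {V : Type*} {G : SimpleGraph V}
    {D : Set V} {a v : V} (hav : G.Adj a v) :
    {b | b ∈ insert v D ∧ G.Adj a b} = insert v {b | b ∈ D ∧ G.Adj a b} := by
  ext b
  simp only [Set.mem_ofPred_eq, Set.mem_insert_iff]
  constructor
  · rintro ⟨rfl | hb, hab⟩
    exacts [.inl rfl, .inr ⟨hb, hab⟩]
  · rintro (rfl | ⟨hb, hab⟩)
    exacts [⟨.inl rfl, hav⟩, ⟨.inr hb, hab⟩]

namespace Coloring0KOn

variable {V : Type*} {G : SimpleGraph V} {k : ℕ} {v : V} {D : Set V}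

lemma coloring0K_of_neighborSet_subset (hD : Coloring0KOn G k {v}ᶜ D)
    (hN : G.neighborSet v ⊆ D) : Coloring0K G k D := by
  refine ⟨fun a b hab => ?_, hD.2.2⟩
  by_cases ha : a = v
  · exact .inr (hN (ha ▸ hab))
  by_cases hb : b = v
  · exact .inl (hN (hb ▸ hab.symm))
  exact hD.2.1 a ha b hb hab

lemma coloring0K_insert (hD : Coloring0KOn G k {v}ᶜ D)
    (hv : {b | b ∈ D ∧ G.Adj v b}.ncard ≤ k)
    (hN : ∀ w ∈ D, G.Adj v w → {b | b ∈ D ∧ G.Adj w b}.ncard < k) :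
    Coloring0K G k (insert v D) := by
  obtain ⟨-, hcov, hdeg⟩ := hD
  refine ⟨fun a b hab => ?_, fun a ha => ?_⟩
  · by_cases ha : a = v
    · exact .inl (.inl ha)
    by_cases hb : b = v
    · exact .inr (.inl hb)
    exact (hcov a ha b hb hab).imp (Set.mem_insert_of_mem v) (Set.mem_insert_of_mem v)
  rcases ha with rfl | ha
  · rwa [G.setOf_mem_insert_and_adj_of_not_adj (G.irrefl)]
  by_cases hav : G.Adj a v
  · rw [G.setOf_mem_insert_and_adj_of_adj hav]
    exact (Set.ncard_insert_le _ _).trans (hN a ha hav.symm)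
  · rw [G.setOf_mem_insert_and_adj_of_not_adj hav]
    exact hdeg a ha

lemma coloring0K_insert_of_neighborSet_disjoint (hD : Coloring0KOn G k {v}ᶜ D)
    (hN : Disjoint (G.neighborSet v) D) : Coloring0K G k (insert v D) := by
  have hempty : {b | b ∈ D ∧ G.Adj v b} = ∅ :=
    Set.eq_empty_of_forall_notMem fun b ⟨hb, hvb⟩ => hN.notMem_of_mem_left hvb hb
  refine hD.coloring0K_insert (by simp [hempty]) fun w hw hvw => ?_
  exact absurd hw (hN.notMem_of_mem_left hvw)

lemma coloring0K_insert_of_neighborSet_inter_eq_singleton (hk : 1 ≤ k)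
    (hD : Coloring0KOn G k {v}ᶜ D) {z : V} (hz : {b | b ∈ D ∧ G.Adj v b} = {z})
    (hzk : {b | b ∈ D ∧ G.Adj z b}.ncard < k) : Coloring0K G k (insert v D) := by
  refine hD.coloring0K_insert (by rwa [hz, Set.ncard_singleton]) fun w hw hvw => ?_
  rwa [show w = z from hz.subset ⟨hw, hvw⟩]

end Coloring0KOn

theorem two_vertex_forcing_general {V : Type*}
    (G : SimpleGraph V) (k : ℕ) (hk : 1 ≤ k)
    (hnc : ¬ ∃ D : Set V, Coloring0K G k D)
    (v u1 u5 : V) (hnv : G.neighborSet v = {u1, u5}) :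
    ∀ D : Set V, Coloring0KOn G k ({v} : Set V)ᶜ D →
      ((u1 ∈ D ∧ u5 ∉ D) ∨ (u5 ∈ D ∧ u1 ∉ D)) ∧
        (∀ z : V, z = u1 ∨ z = u5 → z ∈ D → {b | b ∈ D ∧ G.Adj z b}.ncard = k) := by
  intro D hD
  have not_both_in : ¬ (u1 ∈ D ∧ u5 ∈ D) := fun ⟨h1, h5⟩ =>
    hnc ⟨D, hD.coloring0K_of_neighborSet_subset (hnv ▸ Set.insert_subset h1 (by simpa))⟩
  have not_both_out : ¬ (u1 ∉ D ∧ u5 ∉ D) := fun ⟨h1, h5⟩ =>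
    hnc ⟨_, hD.coloring0K_insert_of_neighborSet_disjoint (by simp [hnv, h1, h5])⟩
  have forced : ∀ z z', G.neighborSet v = {z, z'} → z ∈ D → z' ∉ D →
      {b | b ∈ D ∧ G.Adj z b}.ncard = k := fun z z' hzz' hz hz' => by
    refine (hD.2.2 z hz).antisymm (not_lt.1 fun hlt => hnc ⟨insert v D, ?_⟩)
    refine hD.coloring0K_insert_of_neighborSet_inter_eq_singleton hk ?_ hlt
    ext b
    rw [Set.mem_ofPred_eq, ← G.mem_neighborSet, hzz']
    grind
  refine ⟨by tauto, fun z hz hzD => ?_⟩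
  rcases hz with rfl | rfl
  · exact forced z u5 hnv hzD fun h5 => not_both_in ⟨hzD, h5⟩
  · exact forced z u1 (hnv.trans (Set.pair_comm _ _)) hzD fun h1 => not_both_in ⟨h1, hzD⟩

/-- Section 3 claim about a 2-vertex of a non-(0,k)-colorable graph: if `G` is not
(0,k)-colorable (`k ≥ 1`), `v` is a 2-vertex of `G` with neighbors `u₁` and `u₅`,
and `G - v` is (0,k)-colorable, then in every (0,k)-coloring of `G - v` exactly
one of `u₁, u₅` lies in the 0-class and the other lies in the k-class, and the one
in the k-class has exactly `k` of its neighbors in the k-class. -/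
theorem two_vertex_forcing {V : Type*} [Fintype V] [DecidableEq V]
    (G : SimpleGraph V) [DecidableRel G.Adj] (k : ℕ) (hk : 1 ≤ k)
    (hnc : ¬ ∃ D : Set V, Coloring0K G k D)
    (v u1 u5 : V) (hdv : G.degree v = 2) (hnv : G.neighborSet v = {u1, u5})
    (hcol : ∃ D : Set V, Coloring0KOn G k ({v} : Set V)ᶜ D) :
    ∀ D : Set V, Coloring0KOn G k ({v} : Set V)ᶜ D →
      ((u1 ∈ D ∧ u5 ∉ D) ∨ (u5 ∈ D ∧ u1 ∉ D)) ∧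
        (∀ z : V, z = u1 ∨ z = u5 → z ∈ D → {b | b ∈ D ∧ G.Adj z b}.ncard = k) :=
  two_vertex_forcing_general G k hk hnc v u1 u5 hnv
end
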